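/- arXiv:1211.2136 — 9 statements merged into one kernel-verified Lean document; each statement's English description precedes it below -/
import Mathlib

section
/- Let p and q be even positive integers. If y : ℝ × ℝ → ℝ is a smooth solution of the derivative wave equation y_tt − y_xx = (y_x)^p + (y_t)^q on ℝ × 𝕋 (i.e. 2π-periodic in x) which is quasi-periodic in time, then y is constant. -/
/-- Partial derivative in time of `y : ℝ × ℝ → ℝ`, `y = y (t, x)`. -/
noncomputable def ptime (y : ℝ × ℝ → ℝ) (t x : ℝ) : ℝ :=
  deriv (fun s => y (s, x)) t

/-- Partial derivative in space of `y : ℝ × ℝ → ℝ`, `y = y (t, x)`. -/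
noncomputable def pspace (y : ℝ × ℝ → ℝ) (t x : ℝ) : ℝ :=
  deriv (fun s => y (t, s)) x

/-- Second partial derivative in time. -/
noncomputable def ptime2 (y : ℝ × ℝ → ℝ) (t x : ℝ) : ℝ :=
  deriv (fun s => ptime y s x) t

/-- Second partial derivative in space. -/
noncomputable def pspace2 (y : ℝ × ℝ → ℝ) (t x : ℝ) : ℝ :=
  deriv (fun s => pspace y t s) x

/-- `y (t, x)` is quasi-periodic in time: `y (t, x) = F (ω t, x)` for a smooth
function `F` which is `2π`-periodic in each of its arguments. -/
def QuasiPeriodicInTime (y : ℝ × ℝ → ℝ) : Prop :=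
  ∃ (m : ℕ) (ω : Fin m → ℝ) (F : (Fin m → ℝ) × ℝ → ℝ),
    ContDiff ℝ (⊤ : ℕ∞) F ∧
    (∀ (θ : Fin m → ℝ) (x : ℝ) (i : Fin m),
        F (θ + (2 * Real.pi) • (Pi.single i 1 : Fin m → ℝ), x) = F (θ, x)) ∧
    (∀ (θ : Fin m → ℝ) (x : ℝ), F (θ, x + 2 * Real.pi) = F (θ, x)) ∧
    (∀ t x : ℝ, y (t, x) = F (fun i => ω i * t, x))


open Real MeasureTheory Set intervalIntegral Function


lemma deriv_zero_of_bounded {g g' : ℝ → ℝ} (hg : ∀ t, HasDerivAt g (g' t) t)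
    (hmono : Monotone g') {C : ℝ} (hb : ∀ t, |g t| ≤ C) : ∀ t, g' t = 0 := by
  intro t₀
  have hdiff : Differentiable ℝ g := fun t => (hg t).differentiableAt
  have key : ∀ c : ℝ, c ≠ 0 → g' t₀ = c → False := by
    intro c hc hgc
    obtain ⟨t₁, ht₁⟩ : ∃ t₁ : ℝ, t₁ = t₀ + (2 * C + 1) / c := ⟨_, rfl⟩
    have hC : 0 ≤ C := le_trans (abs_nonneg _) (hb t₀)
    have hcc : c * ((2 * C + 1) / c) = 2 * C + 1 := by field_simp
    have hgrow : g t₀ + (2 * C + 1) ≤ g t₁ := by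
      obtain ⟨h, hh⟩ : ∃ h : ℝ → ℝ, h = fun s => g s - c * s := ⟨_, rfl⟩
      have hhd : ∀ s, HasDerivAt h (g' s - c) s := by
        intro s
        rw [hh]
        exact ((hg s).sub ((hasDerivAt_id s).const_mul c)).congr_deriv (by ring)
      have hhdiff : Differentiable ℝ h := fun s => (hhd s).differentiableAt
      have hval : ∀ s, h s = g s - c * s := fun s => by rw [hh]
      rcases lt_or_gt_of_ne hc with hneg | hpos
      · have hanti : AntitoneOn h (Iic t₀) := by
          apply antitoneOn_of_deriv_nonpos (convex_Iic t₀) hhdiff.continuous.continuousOn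
            hhdiff.differentiableOn
          intro s hs
          rw [(hhd s).deriv]
          simp only [interior_Iic, mem_Iio] at hs
          have := hmono hs.le
          rw [hgc] at this
          linarith
        have ht1le : t₁ ≤ t₀ := by
          have : (2 * C + 1) / c ≤ 0 := div_nonpos_of_nonneg_of_nonpos (by linarith) hneg.le
          linarith
        have hkey := hanti (mem_Iic.mpr ht1le) (mem_Iic.mpr le_rfl) ht1le
        rw [hval t₀, hval t₁] at hkey
        have hct : c * t₁ = c * t₀ + (2 * C + 1) := by rw [ht₁, mul_add, hcc]
        linarith [hkey, hct]
      · have hmon : MonotoneOn h (Ici t₀) := by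
          apply monotoneOn_of_deriv_nonneg (convex_Ici t₀) hhdiff.continuous.continuousOn
            hhdiff.differentiableOn
          intro s hs
          rw [(hhd s).deriv]
          simp only [interior_Ici, mem_Ioi] at hs
          have := hmono hs.le
          rw [hgc] at this
          linarith
        have ht1ge : t₀ ≤ t₁ := by
          have : 0 ≤ (2 * C + 1) / c := div_nonneg (by linarith) hpos.le
          linarith
        have hkey := hmon (mem_Ici.mpr le_rfl) (mem_Ici.mpr ht1ge) ht1ge
        rw [hval t₀, hval t₁] at hkey
        have hct : c * t₁ = c * t₀ + (2 * C + 1) := by rw [ht₁, mul_add, hcc]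
        linarith [hkey, hct]
    have h1 := hb t₀
    have h2 := hb t₁
    rw [abs_le] at h1 h2
    linarith
  by_contra hne
  exact key _ hne rfl

lemma eq_zero_of_periodic_nonneg_integral_zero {f : ℝ → ℝ} (hc : Continuous f)
    (hnn : ∀ x, 0 ≤ f x) (hper : Function.Periodic f (2 * π))
    (hint : ∫ x in (0:ℝ)..(2 * π), f x = 0) : ∀ x, f x = 0 := by
  intro x₀
  by_contra h
  have hπ := Real.pi_pos
  have hpos : 0 < f x₀ := lt_of_le_of_ne (hnn x₀) (Ne.symm h)
  obtain ⟨a, ha⟩ : ∃ a : ℝ, a = x₀ - π := ⟨_, rfl⟩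
  have h1 : ∫ x in a..(a + 2 * π), f x = 0 := by
    rw [hper.intervalIntegral_add_eq a 0]
    simpa using hint
  have h2 : 0 < ∫ x in a..(a + 2 * π), f x := by
    rw [intervalIntegral.integral_pos_iff_support_of_nonneg_ae
      (Filter.Eventually.of_forall hnn) (hc.intervalIntegrable _ _)]
    refine ⟨by linarith, ?_⟩
    have hopen : IsOpen (Function.support f ∩ Ioo a (a + 2 * π)) :=
      hc.isOpen_support.inter isOpen_Ioo
    have hne : (Function.support f ∩ Ioo a (a + 2 * π)).Nonempty :=
      ⟨x₀, Function.mem_support.mpr hpos.ne', ⟨by rw [ha]; linarith, by rw [ha]; linarith⟩⟩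
    exact lt_of_lt_of_le (hopen.measure_pos volume hne)
      (measure_mono (inter_subset_inter_right _ Ioo_subset_Ioc_self))
  rw [h1] at h2
  exact lt_irrefl 0 h2

lemma hasDerivAt_slice_t {f : ℝ × ℝ → ℝ} (hf : Differentiable ℝ f) (t x : ℝ) :
    HasDerivAt (fun s => f (s, x)) (fderiv ℝ f (t, x) (1, 0)) t := by
  have h := (hf (t, x)).hasFDerivAt
  have hg : HasDerivAt (fun s : ℝ => ((s, x) : ℝ × ℝ)) ((1 : ℝ), (0 : ℝ)) t :=
    (hasDerivAt_id t).prodMk (hasDerivAt_const t x)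
  exact h.comp_hasDerivAt t hg

lemma hasDerivAt_slice_x {f : ℝ × ℝ → ℝ} (hf : Differentiable ℝ f) (t x : ℝ) :
    HasDerivAt (fun s => f (t, s)) (fderiv ℝ f (t, x) (0, 1)) x := by
  have h := (hf (t, x)).hasFDerivAt
  have hg : HasDerivAt (fun s : ℝ => ((t, s) : ℝ × ℝ)) ((0 : ℝ), (1 : ℝ)) x :=
    (hasDerivAt_const x t).prodMk (hasDerivAt_id x)
  exact h.comp_hasDerivAt x hg

lemma contDiff_partial_t {f : ℝ × ℝ → ℝ} (hf : ContDiff ℝ (⊤ : ℕ∞) f) :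
    ContDiff ℝ (⊤ : ℕ∞) (fun z => fderiv ℝ f z (1, 0)) :=
  (hf.fderiv_right (by simp)).clm_apply contDiff_const

lemma contDiff_partial_x {f : ℝ × ℝ → ℝ} (hf : ContDiff ℝ (⊤ : ℕ∞) f) :
    ContDiff ℝ (⊤ : ℕ∞) (fun z => fderiv ℝ f z (0, 1)) :=
  (hf.fderiv_right (by simp)).clm_apply contDiff_const

/-- Differentiation under the interval integral for a smooth integrand. -/
lemma hasDerivAt_param_integral {f : ℝ × ℝ → ℝ} (hf : ContDiff ℝ (⊤ : ℕ∞) f) (a b t₀ : ℝ) :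
    HasDerivAt (fun t => ∫ x in a..b, f (t, x))
      (∫ x in a..b, fderiv ℝ f (t₀, x) (1, 0)) t₀ := by
  have hfc : Continuous f := hf.continuous
  have hGc : Continuous (fun z : ℝ × ℝ => fderiv ℝ f z (1, 0)) :=
    (contDiff_partial_t hf).continuous
  have hK : IsCompact ((Icc (t₀ - 1) (t₀ + 1)) ×ˢ (uIcc a b)) :=
    isCompact_Icc.prod isCompact_uIcc
  obtain ⟨M, hM⟩ := hK.exists_bound_of_continuousOn hGc.continuousOn
  have main := intervalIntegral.hasDerivAt_integral_of_dominated_loc_of_deriv_le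
    (F := fun t x => f (t, x)) (F' := fun t x => fderiv ℝ f (t, x) (1, 0))
    (x₀ := t₀) (a := a) (b := b) (μ := volume) (bound := fun _ => M)
    (s := Metric.ball t₀ 1) (Metric.ball_mem_nhds t₀ zero_lt_one)
    (Filter.Eventually.of_forall fun t =>
      ((hfc.comp (Continuous.prodMk_right t)).aestronglyMeasurable))
    ((hfc.comp (Continuous.prodMk_right t₀)).intervalIntegrable a b)
    ((hGc.comp (Continuous.prodMk_right t₀)).aestronglyMeasurable)
    (Filter.Eventually.of_forall fun x hx t ht => by
      apply hM
      refine ⟨?_, uIoc_subset_uIcc hx⟩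
      simp only [Metric.mem_ball, Real.dist_eq] at ht
      have := abs_le.mp ht.le
      exact ⟨by linarith [this.1], by linarith [this.2]⟩)
    (intervalIntegrable_const)
    (Filter.Eventually.of_forall fun x hx t ht =>
      hasDerivAt_slice_t (hf.differentiable (by simp)) t x)
  exact main.2

lemma sub_floor_bounds {T u : ℝ} (hT : 0 < T) :
    0 ≤ u - T * ⌊u / T⌋ ∧ u - T * ⌊u / T⌋ ≤ T := by
  have h1 : (⌊u / T⌋ : ℝ) ≤ u / T := Int.floor_le _
  have h2 : u / T < ⌊u / T⌋ + 1 := Int.lt_floor_add_one _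
  have h3 : u / T * T = u := div_mul_cancel₀ _ hT.ne'
  constructor
  · nlinarith [mul_le_mul_of_nonneg_right h1 hT.le]
  · nlinarith [mul_le_mul_of_nonneg_right h2.le hT.le]

lemma qp_bounded {y : ℝ × ℝ → ℝ} (hqp : QuasiPeriodicInTime y) :
    ∃ C : ℝ, ∀ t x : ℝ, |y (t, x)| ≤ C := by
  obtain ⟨m, ω, F, hF, hθ, hx, hyF⟩ := hqp
  have hπ := Real.pi_pos
  have hθz : ∀ (θ : Fin m → ℝ) (x : ℝ) (i : Fin m) (k : ℤ),
      F (θ + Pi.single i ((2 * π) * k), x) = F (θ, x) := by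
    intro θ x i k
    induction k using Int.induction_on with
    | zero => simp
    | succ n ih =>
        push_cast at ih ⊢
        have e2 : θ + Pi.single i (2 * π * ((n:ℝ) + 1))
            = (θ + Pi.single i (2 * π * (n:ℝ))) + (2 * π) • (Pi.single i 1 : Fin m → ℝ) := by
          funext j
          by_cases hji : j = i
          · subst hji; simp [Pi.single_apply]; ring
          · simp [Pi.single_apply, hji]
        rw [e2, hθ, ih]
    | pred n ih =>
        push_cast at ih ⊢
        have e2 : θ + Pi.single i (2 * π * (-(n:ℝ)))
            = (θ + Pi.single i (2 * π * (-(n:ℝ) - 1))) + (2 * π) • (Pi.single i 1 : Fin m → ℝ) := by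
          funext j
          by_cases hji : j = i
          · subst hji; simp [Pi.single_apply]; ring
          · simp [Pi.single_apply, hji]
        rw [e2, hθ] at ih
        exact ih
  have hxz : ∀ (θ : Fin m → ℝ) (x : ℝ) (k : ℤ), F (θ, x + (2 * π) * k) = F (θ, x) := by
    intro θ x k
    induction k using Int.induction_on with
    | zero => simp
    | succ n ih =>
        push_cast at ih ⊢
        have e2 : x + 2 * π * ((n:ℝ) + 1) = (x + 2 * π * (n:ℝ)) + 2 * π := by ring
        rw [e2, hx, ih]
    | pred n ih =>
        push_cast at ih ⊢
        have e2 : x + 2 * π * (-(n:ℝ)) = (x + 2 * π * (-(n:ℝ) - 1)) + 2 * π := by ring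
        rw [e2, hx] at ih
        exact ih
  have hsum : ∀ (x : ℝ) (k : Fin m → ℤ) (s : Finset (Fin m)) (θ : Fin m → ℝ),
      F (θ + ∑ i ∈ s, Pi.single i ((2 * π) * k i), x) = F (θ, x) := by
    intro x k s
    induction s using Finset.induction_on with
    | empty => intro θ; simp
    | @insert j s' hj ih =>
        intro θ
        rw [Finset.sum_insert hj, ← add_assoc, ih, hθz]
  -- reduction to the fundamental cube
  have hred : ∀ (θ : Fin m → ℝ) (x : ℝ), ∃ θ' : Fin m → ℝ, ∃ x' : ℝ,
      θ' ∈ Icc (0 : Fin m → ℝ) (fun _ => 2 * π) ∧ x' ∈ Icc (0:ℝ) (2 * π) ∧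
      F (θ', x') = F (θ, x) := by
    intro θ x
    have hT : (0:ℝ) < 2 * π := by linarith
    refine ⟨θ + ∑ i, Pi.single i ((2 * π) * (-⌊θ i / (2 * π)⌋ : ℤ)),
      x + (2 * π) * (-⌊x / (2 * π)⌋ : ℤ), ?_, ?_, ?_⟩
    · have hval : ∀ j, (θ + ∑ i, Pi.single i ((2 * π) * ((-⌊θ i / (2 * π)⌋ : ℤ) : ℝ))) j
          = θ j - 2 * π * ⌊θ j / (2 * π)⌋ := by
        intro j
        have hs : (∑ i, Pi.single i ((2 * π) * ((-⌊θ i / (2 * π)⌋ : ℤ) : ℝ)) : Fin m → ℝ)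
            = fun i => (2 * π) * ((-⌊θ i / (2 * π)⌋ : ℤ) : ℝ) :=
          Finset.univ_sum_single (fun i => (2 * π) * ((-⌊θ i / (2 * π)⌋ : ℤ) : ℝ))
        simp only [Pi.add_apply]
        rw [hs]
        push_cast
        ring
      constructor
      · intro j
        rw [hval j]
        have := (sub_floor_bounds (u := θ j) hT).1
        simpa using this
      · intro j
        rw [hval j]
        exact (sub_floor_bounds (u := θ j) hT).2
    · constructor
      · have := (sub_floor_bounds (u := x) hT).1
        push_cast
        linarith
      · have := (sub_floor_bounds (u := x) hT).2
        push_cast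
        linarith
    · rw [hxz, hsum]
  -- compactness bound
  obtain ⟨C, hC⟩ := (IsCompact.exists_bound_of_continuousOn
    ((isCompact_Icc (a := (0 : Fin m → ℝ)) (b := fun _ => 2 * π)).prod
      (isCompact_Icc (a := (0:ℝ)) (b := 2 * π)))
    hF.continuous.continuousOn)
  refine ⟨C, fun t x => ?_⟩
  rw [hyF t x]
  obtain ⟨θ', x', hθ', hx', hFeq⟩ := hred (fun i => ω i * t) x
  rw [← hFeq]
  simpa using hC (θ', x') (mem_prod.mpr ⟨hθ', hx'⟩)

/-- For even `p, q`, the equation `y_tt - y_xx = y_x^p + y_t^q` has no smooth,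
spatially 2π-periodic, time-quasi-periodic solutions except the constants. -/
theorem no_quasiperiodic_even_yxp_ytq
    (p q : ℕ) (hp : Even p) (hp0 : 0 < p) (hq : Even q) (hq0 : 0 < q)
    (y : ℝ × ℝ → ℝ) (hy : ContDiff ℝ (⊤ : ℕ∞) y)
    (hper : ∀ t x : ℝ, y (t, x + 2 * Real.pi) = y (t, x))
    (hqp : QuasiPeriodicInTime y)
    (heq : ∀ t x : ℝ,
      ptime2 y t x - pspace2 y t x = (pspace y t x) ^ p + (ptime y t x) ^ q) :
    ∀ t x t' x' : ℝ, y (t, x) = y (t', x') := by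
  have hπ := Real.pi_pos
  have hydiff : Differentiable ℝ y := hy.differentiable (by simp)
  -- first partial derivatives as smooth functions of the pair
  obtain ⟨Y1, hY1⟩ : ∃ Y1 : ℝ × ℝ → ℝ, Y1 = fun z => fderiv ℝ y z (1, 0) := ⟨_, rfl⟩
  obtain ⟨Y2, hY2⟩ : ∃ Y2 : ℝ × ℝ → ℝ, Y2 = fun z => fderiv ℝ y z (0, 1) := ⟨_, rfl⟩
  have hY1s : ContDiff ℝ (⊤ : ℕ∞) Y1 := by rw [hY1]; exact contDiff_partial_t hy
  have hY2s : ContDiff ℝ (⊤ : ℕ∞) Y2 := by rw [hY2]; exact contDiff_partial_x hy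
  have hY1sl : ∀ t x, HasDerivAt (fun s => y (s, x)) (Y1 (t, x)) t := by
    intro t x; rw [hY1]; exact hasDerivAt_slice_t hydiff t x
  have hY2sl : ∀ t x, HasDerivAt (fun s => y (t, s)) (Y2 (t, x)) x := by
    intro t x; rw [hY2]; exact hasDerivAt_slice_x hydiff t x
  have hpt : ∀ t x, ptime y t x = Y1 (t, x) := fun t x => (hY1sl t x).deriv
  have hps : ∀ t x, pspace y t x = Y2 (t, x) := fun t x => (hY2sl t x).deriv
  have hY1d : Differentiable ℝ Y1 := hY1s.differentiable (by simp)
  have hY2d : Differentiable ℝ Y2 := hY2s.differentiable (by simp)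
  -- second partial derivatives
  have hpt2 : ∀ t x, ptime2 y t x = fderiv ℝ Y1 (t, x) (1, 0) := by
    intro t x
    have hfun : (fun s => ptime y s x) = fun s => Y1 (s, x) := funext fun s => hpt s x
    show deriv (fun s => ptime y s x) t = _
    rw [hfun]
    exact (hasDerivAt_slice_t hY1d t x).deriv
  have hps2 : ∀ t x, pspace2 y t x = fderiv ℝ Y2 (t, x) (0, 1) := by
    intro t x
    have hfun : (fun s => pspace y t s) = fun s => Y2 (t, s) := funext fun s => hps t s
    show deriv (fun s => pspace y t s) x = _
    rw [hfun]
    exact (hasDerivAt_slice_x hY2d t x).deriv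
  -- periodicity in x of Y1 and Y2
  have hY1per : ∀ t x, Y1 (t, x + 2 * π) = Y1 (t, x) := by
    intro t x
    have hfun : (fun s => y (s, x + 2 * π)) = fun s => y (s, x) :=
      funext fun s => hper s x
    have h1 := hY1sl t (x + 2 * π)
    rw [hfun] at h1
    exact h1.unique (hY1sl t x)
  have hY2per : ∀ t x, Y2 (t, x + 2 * π) = Y2 (t, x) := by
    intro t x
    have h2 : HasDerivAt (fun s => y (t, s + 2 * π)) (Y2 (t, x + 2 * π) * 1) x :=
      by have := (hY2sl t (x + 2 * π)).comp x ((hasDerivAt_id x).add_const (2 * π)); exact this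
    have hfun : (fun s => y (t, s + 2 * π)) = fun s => y (t, s) :=
      funext fun s => hper t s
    rw [hfun, mul_one] at h2
    exact h2.unique (hY2sl t x)
  -- FTC : the spatial second derivative integrates to zero over a period
  have hZ2zero : ∀ t, ∫ x in (0:ℝ)..(2 * π), fderiv ℝ Y2 (t, x) (0, 1) = 0 := by
    intro t
    have hcont : Continuous fun x => fderiv ℝ Y2 (t, x) (0, 1) :=
      (contDiff_partial_x hY2s).continuous.comp (Continuous.prodMk_right t)
    have hftc := intervalIntegral.integral_eq_sub_of_hasDerivAt
      (f := fun s => Y2 (t, s)) (f' := fun x => fderiv ℝ Y2 (t, x) (0, 1))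
      (a := (0:ℝ)) (b := 2 * π)
      (fun x _ => hasDerivAt_slice_x hY2d t x)
      (hcont.intervalIntegrable _ _)
    rw [hftc]
    have h2π : Y2 (t, 2 * π) = Y2 (t, 0) := by
      have := hY2per t 0
      simpa using this
    rw [h2π, sub_self]
  -- the three integral functions
  obtain ⟨g1, hg1⟩ : ∃ g1 : ℝ → ℝ, g1 = fun t => ∫ x in (0:ℝ)..(2 * π), Y1 (t, x) := ⟨_, rfl⟩
  obtain ⟨g2, hg2⟩ : ∃ g2 : ℝ → ℝ,
      g2 = fun t => ∫ x in (0:ℝ)..(2 * π), ((Y2 (t, x)) ^ p + (Y1 (t, x)) ^ q) := ⟨_, rfl⟩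
  have hgd : ∀ t₀, HasDerivAt (fun t => ∫ x in (0:ℝ)..(2 * π), y (t, x)) (g1 t₀) t₀ := by
    intro t₀
    have := hasDerivAt_param_integral hy 0 (2 * π) t₀
    rw [hg1, hY1]
    exact this
  have hg1d : ∀ t₀, HasDerivAt g1 (g2 t₀) t₀ := by
    intro t₀
    have h0 := hasDerivAt_param_integral hY1s 0 (2 * π) t₀
    rw [hg1, hg2]
    have hint_eq : ∫ x in (0:ℝ)..(2 * π), fderiv ℝ Y1 (t₀, x) (1, 0)
        = ∫ x in (0:ℝ)..(2 * π), ((Y2 (t₀, x)) ^ p + (Y1 (t₀, x)) ^ q) := by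
      have hptws : ∀ x, fderiv ℝ Y1 (t₀, x) (1, 0)
          = fderiv ℝ Y2 (t₀, x) (0, 1) + ((Y2 (t₀, x)) ^ p + (Y1 (t₀, x)) ^ q) := by
        intro x
        have := heq t₀ x
        rw [hpt2, hps2, hps, hpt] at this
        linarith
      rw [intervalIntegral.integral_congr (g := fun x =>
        fderiv ℝ Y2 (t₀, x) (0, 1) + ((Y2 (t₀, x)) ^ p + (Y1 (t₀, x)) ^ q))
        (fun x _ => hptws x)]
      have hc1 : Continuous fun x => fderiv ℝ Y2 (t₀, x) (0, 1) :=
        (contDiff_partial_x hY2s).continuous.comp (Continuous.prodMk_right t₀)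
      have hc2 : Continuous fun x => ((Y2 (t₀, x)) ^ p + (Y1 (t₀, x)) ^ q) :=
        ((hY2s.continuous.comp (Continuous.prodMk_right t₀)).pow p).add
          ((hY1s.continuous.comp (Continuous.prodMk_right t₀)).pow q)
      rw [intervalIntegral.integral_add (hc1.intervalIntegrable _ _)
        (hc2.intervalIntegrable _ _), hZ2zero t₀, zero_add]
    show HasDerivAt _ (∫ x in (0:ℝ)..(2 * π), ((Y2 (t₀, x)) ^ p + (Y1 (t₀, x)) ^ q)) t₀
    rw [← hint_eq]
    exact h0
  -- g1 is monotone
  have hg2nn : ∀ t, 0 ≤ g2 t := by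
    intro t
    rw [hg2]
    apply intervalIntegral.integral_nonneg (by linarith)
    intro x _
    exact add_nonneg (hp.pow_nonneg _) (hq.pow_nonneg _)
  have hg1mono : Monotone g1 := by
    apply monotone_of_deriv_nonneg (fun t => (hg1d t).differentiableAt)
    intro t
    rw [(hg1d t).deriv]
    exact hg2nn t
  -- g is bounded
  obtain ⟨C, hC⟩ := qp_bounded hqp
  have hgb : ∀ t, |(fun t => ∫ x in (0:ℝ)..(2 * π), y (t, x)) t| ≤ C * |2 * π - 0| := by
    intro t
    have := intervalIntegral.norm_integral_le_of_norm_le_const (a := (0:ℝ)) (b := 2 * π)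
      (C := C) (f := fun x => y (t, x))
      (fun x _ => by rw [Real.norm_eq_abs]; exact hC t x)
    simpa [Real.norm_eq_abs] using this
  -- hence g1 ≡ 0 and g2 ≡ 0
  have hg1zero : ∀ t, g1 t = 0 := deriv_zero_of_bounded hgd hg1mono hgb
  have hg2zero : ∀ t, g2 t = 0 := by
    intro t
    have hg1const : g1 = fun _ => (0:ℝ) := funext hg1zero
    have := (hg1d t).deriv
    rw [hg1const] at this
    simp at this
    exact this.symm
  -- pointwise vanishing of Y1 and Y2
  have hzero : ∀ t x, Y1 (t, x) = 0 ∧ Y2 (t, x) = 0 := by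
    intro t x
    have hfc : Continuous fun x => ((Y2 (t, x)) ^ p + (Y1 (t, x)) ^ q) :=
      ((hY2s.continuous.comp (Continuous.prodMk_right t)).pow p).add
        ((hY1s.continuous.comp (Continuous.prodMk_right t)).pow q)
    have hfper : Function.Periodic (fun x => ((Y2 (t, x)) ^ p + (Y1 (t, x)) ^ q)) (2 * π) := by
      intro s
      simp only [hY1per t s, hY2per t s]
    have hfnn : ∀ x, 0 ≤ ((Y2 (t, x)) ^ p + (Y1 (t, x)) ^ q) :=
      fun x => add_nonneg (hp.pow_nonneg _) (hq.pow_nonneg _)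
    have hint0 : ∫ x in (0:ℝ)..(2 * π), ((Y2 (t, x)) ^ p + (Y1 (t, x)) ^ q) = 0 := by
      have := hg2zero t
      rw [hg2] at this
      exact this
    have hall := eq_zero_of_periodic_nonneg_integral_zero hfc hfnn hfper hint0 x
    have h1 : (Y2 (t, x)) ^ p = 0 ∧ (Y1 (t, x)) ^ q = 0 := by
      constructor <;> nlinarith [hp.pow_nonneg (Y2 (t, x)), hq.pow_nonneg (Y1 (t, x))]
    exact ⟨pow_eq_zero_iff hq0.ne' |>.mp h1.2, pow_eq_zero_iff hp0.ne' |>.mp h1.1⟩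
  -- conclude
  intro t x t' x'
  have step1 : y (t, x) = y (t, x') := by
    apply is_const_of_deriv_eq_zero (f := fun s => y (t, s))
      (fun s => (hY2sl t s).differentiableAt)
      (fun s => by rw [(hY2sl t s).deriv]; exact (hzero t s).2)
  have step2 : y (t, x') = y (t', x') := by
    apply is_const_of_deriv_eq_zero (f := fun s => y (s, x'))
      (fun s => (hY1sl s x').differentiableAt)
      (fun s => by rw [(hY1sl s x').deriv]; exact (hzero s x').1)
  rw [step1, step2]
end

section
/- Let p be a positive integer and f : ℝ → ℝ a continuous function. Let y : ℝ × ℝ → ℝ be smooth, 2π-periodic in x, and satisfy y_tt − y_xx = (y_x)^p + f(y) on ℝ². Then the function M(t) := ∫₀^{2π} y_x(t, x) · y_t(t, x) dx is differentiable in t and M′(t) = ∫₀^{2π} (y_x(t, x))^{p+1} dx for all t ∈ ℝ. -/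
open MeasureTheory intervalIntegral Set

lemma aux_smooth_dir (y : ℝ × ℝ → ℝ) (hy : ContDiff ℝ (⊤ : ℕ∞) y) (v : ℝ × ℝ) :
    ContDiff ℝ (⊤ : ℕ∞) (fun q => fderiv ℝ y q v) :=
  (hy.fderiv_right (by simp)).clm_apply contDiff_const

lemma aux_hasDerivAt_t (y : ℝ × ℝ → ℝ) (hy : ContDiff ℝ (⊤ : ℕ∞) y) (t x : ℝ) :
    HasDerivAt (fun s => y (s, x)) (fderiv ℝ y (t, x) (1, 0)) t := by
  have h1 : HasDerivAt (fun s : ℝ => (s, x)) ((1 : ℝ), (0 : ℝ)) t :=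
    HasDerivAt.prodMk (hasDerivAt_id t) (hasDerivAt_const t x)
  exact (hy.differentiable (by simp) (t, x)).hasFDerivAt.comp_hasDerivAt t h1

lemma aux_hasDerivAt_x (y : ℝ × ℝ → ℝ) (hy : ContDiff ℝ (⊤ : ℕ∞) y) (t x : ℝ) :
    HasDerivAt (fun s => y (t, s)) (fderiv ℝ y (t, x) (0, 1)) x := by
  have h1 : HasDerivAt (fun s : ℝ => (t, s)) ((0 : ℝ), (1 : ℝ)) x :=
    HasDerivAt.prodMk (hasDerivAt_const x t) (hasDerivAt_id x)
  exact (hy.differentiable (by simp) (t, x)).hasFDerivAt.comp_hasDerivAt x h1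

lemma aux_clairaut (y : ℝ × ℝ → ℝ) (hy : ContDiff ℝ (⊤ : ℕ∞) y) (q : ℝ × ℝ) :
    fderiv ℝ (fun r => fderiv ℝ y r ((0:ℝ), (1:ℝ))) q (1, 0)
      = fderiv ℝ (fun r => fderiv ℝ y r ((1:ℝ), (0:ℝ))) q (0, 1) := by
  have hd : DifferentiableAt ℝ (fderiv ℝ y) q :=
    ((hy.fderiv_right (m := (⊤ : ℕ∞)) (by simp)).differentiable (by simp)) q
  have h1 : ∀ v w : ℝ × ℝ, fderiv ℝ (fun r => fderiv ℝ y r v) q w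
      = fderiv ℝ (fderiv ℝ y) q w v := by
    intro v w
    rw [fderiv_clm_apply hd (differentiableAt_const v)]
    simp
  rw [h1, h1]
  exact (hy.contDiffAt.isSymmSndFDerivAt (by rw [minSmoothness_of_isRCLikeNormedField]; exact WithTop.coe_le_coe.mpr (le_top : (2 : ℕ∞) ≤ ⊤))).eq _ _

/-- Lyapunov function computation for `y_tt - y_xx = y_x^p + f(y)`: the momentum
`M(t) = ∫₀^{2π} y_x y_t dx` is differentiable with `M'(t) = ∫₀^{2π} y_x^{p+1} dx`. -/
theorem momentum_derivative_yxp
    (p : ℕ) (hp0 : 0 < p)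
    (f : ℝ → ℝ) (hf : Continuous f)
    (y : ℝ × ℝ → ℝ) (hy : ContDiff ℝ (⊤ : ℕ∞) y)
    (hper : ∀ t x : ℝ, y (t, x + 2 * Real.pi) = y (t, x))
    (heq : ∀ t x : ℝ,
      ptime2 y t x - pspace2 y t x = (pspace y t x) ^ p + f (y (t, x))) :
    ∀ t : ℝ,
      HasDerivAt (fun s => ∫ x in (0:ℝ)..(2 * Real.pi), pspace y s x * ptime y s x)
        (∫ x in (0:ℝ)..(2 * Real.pi), (pspace y t x) ^ (p + 1)) t := by
  simp only [ptime2, pspace2, ptime, pspace] at heq ⊢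
  intro t
  set U : ℝ × ℝ → ℝ := fun q => fderiv ℝ y q (1, 0) with hUdef
  set V : ℝ × ℝ → ℝ := fun q => fderiv ℝ y q (0, 1) with hVdef
  have hUsm : ContDiff ℝ (⊤ : ℕ∞) U := aux_smooth_dir y hy _
  have hVsm : ContDiff ℝ (⊤ : ℕ∞) V := aux_smooth_dir y hy _
  have hU : ∀ a b : ℝ, deriv (fun s => y (s, b)) a = U (a, b) :=
    fun a b => (aux_hasDerivAt_t y hy a b).deriv
  have hV : ∀ a b : ℝ, deriv (fun s => y (a, s)) b = V (a, b) :=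
    fun a b => (aux_hasDerivAt_x y hy a b).deriv
  set W : ℝ × ℝ → ℝ :=
    fun q => fderiv ℝ V q (1, 0) * U q + V q * fderiv ℝ U q (1, 0) with hWdef
  have hWcont : Continuous W := by
    apply Continuous.add
    · exact ((aux_smooth_dir V hVsm _).continuous).mul hUsm.continuous
    · exact hVsm.continuous.mul ((aux_smooth_dir U hUsm _).continuous)
  have hderiv : ∀ a b : ℝ, HasDerivAt (fun s => V (s, b) * U (s, b)) (W (a, b)) a :=
    fun a b => (aux_hasDerivAt_t V hVsm a b).mul (aux_hasDerivAt_t U hUsm a b)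
  have hUper : ∀ a b : ℝ, U (a, b + 2 * Real.pi) = U (a, b) := by
    intro a b
    rw [← hU, ← hU]
    congr 1; funext s; exact hper s b
  have hVper : ∀ a b : ℝ, V (a, b + 2 * Real.pi) = V (a, b) := by
    intro a b
    rw [← hV, ← hV]
    have h2 : (fun s => y (a, s + 2 * Real.pi)) = fun s => y (a, s) := by
      funext s; exact hper a s
    rw [← deriv_comp_add_const (f := fun s => y (a, s)) (a := 2 * Real.pi), h2]
  -- step 1: differentiation under the integral sign
  obtain ⟨C, hC⟩ := IsCompact.exists_bound_of_continuousOn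
    ((isCompact_closedBall t 1).prod (isCompact_uIcc (a := (0:ℝ)) (b := 2 * Real.pi)))
    hWcont.continuousOn
  have step1 : HasDerivAt (fun s => ∫ x in (0:ℝ)..(2 * Real.pi), V (s, x) * U (s, x))
      (∫ x in (0:ℝ)..(2 * Real.pi), W (t, x)) t := by
    refine (intervalIntegral.hasDerivAt_integral_of_dominated_loc_of_deriv_le
      (μ := MeasureTheory.volume)
      (F := fun s x => V (s, x) * U (s, x)) (F' := fun s x => W (s, x))
      (bound := fun _ => C) (a := 0) (b := 2 * Real.pi) (x₀ := t)
      (s := Metric.ball t 1) (Metric.ball_mem_nhds t one_pos) ?_ ?_ ?_ ?_ ?_ ?_).2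
    · filter_upwards with s
      exact ((hVsm.continuous.comp (Continuous.prodMk_right s)).mul
        (hUsm.continuous.comp (Continuous.prodMk_right s))).aestronglyMeasurable
    · exact ((hVsm.continuous.comp (Continuous.prodMk_right t)).mul
        (hUsm.continuous.comp (Continuous.prodMk_right t))).intervalIntegrable _ _
    · exact (hWcont.comp (Continuous.prodMk_right t)).aestronglyMeasurable
    · filter_upwards with x hx s hs
      exact hC (s, x) ⟨Metric.ball_subset_closedBall hs, uIoc_subset_uIcc hx⟩
    · exact intervalIntegrable_const
    · filter_upwards with x _ s _
      exact hderiv s x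
  -- step 2: integration by parts
  have step2 : (∫ x in (0:ℝ)..(2 * Real.pi), W (t, x))
      = ∫ x in (0:ℝ)..(2 * Real.pi), V (t, x) ^ (p + 1) := by
    have hg : ∀ x : ℝ, HasDerivAt
        (fun b => U (t, b) * U (t, b) / 2 + V (t, b) * V (t, b) / 2
          + ∫ s in (0:ℝ)..(y (t, b)), f s)
        (W (t, x) - V (t, x) ^ (p + 1)) x := by
      intro x
      have hUx : HasDerivAt (fun b => U (t, b)) (fderiv ℝ U (t, x) (0, 1)) x :=
        aux_hasDerivAt_x U hUsm t x
      have hVx : HasDerivAt (fun b => V (t, b)) (fderiv ℝ V (t, x) (0, 1)) x :=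
        aux_hasDerivAt_x V hVsm t x
      have hyx : HasDerivAt (fun b => y (t, b)) (V (t, x)) x :=
        aux_hasDerivAt_x y hy t x
      have hΦ : HasDerivAt (fun u => ∫ s in (0:ℝ)..u, f s) (f (y (t, x))) (y (t, x)) :=
        (hf.integral_hasStrictDerivAt 0 (y (t, x))).hasDerivAt
      have hcomp : HasDerivAt (fun b => ∫ s in (0:ℝ)..(y (t, b)), f s)
          (f (y (t, x)) * V (t, x)) x := by have := hΦ.comp x hyx; exact this
      have hmain :=
        (((hUx.mul hUx).div_const 2).add ((hVx.mul hVx).div_const 2)).add hcomp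
      refine HasDerivAt.congr_deriv hmain ?_
      have e1 : fderiv ℝ V (t, x) (1, 0) = fderiv ℝ U (t, x) (0, 1) := by
        rw [hUdef, hVdef]; exact aux_clairaut y hy (t, x)
      have e2 : fderiv ℝ U (t, x) (1, 0)
          = fderiv ℝ V (t, x) (0, 1) + V (t, x) ^ p + f (y (t, x)) := by
        have h1 : deriv (fun s => deriv (fun s' => y (s', x)) s) t
            = fderiv ℝ U (t, x) (1, 0) := by
          have h3 : (fun s => deriv (fun s' => y (s', x)) s) = fun s => U (s, x) := by
            funext s; exact hU s x
          rw [h3]; exact (aux_hasDerivAt_t U hUsm t x).deriv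
        have h2 : deriv (fun s => deriv (fun s' => y (t, s')) s) x
            = fderiv ℝ V (t, x) (0, 1) := by
          have h3 : (fun s => deriv (fun s' => y (t, s')) s) = fun s => V (t, s) := by
            funext s; exact hV t s
          rw [h3]; exact (aux_hasDerivAt_x V hVsm t x).deriv
        have h4 := heq t x
        rw [h1, h2, hV] at h4
        linarith
      rw [hWdef]
      simp only [e1, e2]
      ring
    have hcont : Continuous fun x => W (t, x) - V (t, x) ^ (p + 1) :=
      (hWcont.comp (Continuous.prodMk_right t)).sub
        ((hVsm.continuous.comp (Continuous.prodMk_right t)).pow _)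
    have key := intervalIntegral.integral_eq_sub_of_hasDerivAt
      (f := fun b => U (t, b) * U (t, b) / 2 + V (t, b) * V (t, b) / 2
        + ∫ s in (0:ℝ)..(y (t, b)), f s)
      (fun x _ => hg x) (hcont.intervalIntegrable 0 (2 * Real.pi))
    have hper0 : U (t, 2 * Real.pi) * U (t, 2 * Real.pi) / 2
        + V (t, 2 * Real.pi) * V (t, 2 * Real.pi) / 2
        + (∫ s in (0:ℝ)..(y (t, 2 * Real.pi)), f s)
        = U (t, 0) * U (t, 0) / 2 + V (t, 0) * V (t, 0) / 2
        + ∫ s in (0:ℝ)..(y (t, 0)), f s := by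
      have h0 : (2 : ℝ) * Real.pi = 0 + 2 * Real.pi := by rw [zero_add]
      rw [h0, hUper, hVper, hper]
    beta_reduce at key
    rw [hper0, sub_self] at key
    have hsub := intervalIntegral.integral_sub
      ((hWcont.comp (Continuous.prodMk_right t)).intervalIntegrable
        (μ := MeasureTheory.volume) 0 (2 * Real.pi))
      (((hVsm.continuous.comp (Continuous.prodMk_right t)).pow (p + 1)).intervalIntegrable
        0 (2 * Real.pi))
    simp only [Function.comp_def, Pi.pow_apply] at hsub
    rw [hsub] at key
    linarith
  -- conclusion
  have hfun : (fun s => ∫ x in (0:ℝ)..(2 * Real.pi),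
      deriv (fun s' => y (s, s')) x * deriv (fun s' => y (s', x)) s)
      = fun s => ∫ x in (0:ℝ)..(2 * Real.pi), V (s, x) * U (s, x) := by
    funext s
    apply intervalIntegral.integral_congr
    intro x _
    simp only [hU, hV]
  have hval : (∫ x in (0:ℝ)..(2 * Real.pi), (deriv (fun s => y (t, s)) x) ^ (p + 1))
      = ∫ x in (0:ℝ)..(2 * Real.pi), V (t, x) ^ (p + 1) := by
    apply intervalIntegral.integral_congr
    intro x _
    simp only [hV]
  rw [hfun, hval, ← step2]
  exact step1
end

section
/- Let p be a positive integer and f : ℝ → ℝ a continuous function. Let y : ℝ × ℝ → ℝ be smooth, 2π-periodic in x, and satisfy y_tt − y_xx = ∂_x(y^p) + f(y), that is y_tt − y_xx = p·y^{p−1}·y_x + f(y), on ℝ². Then the function M(t) := ∫₀^{2π} y_x(t, x) · y_t(t, x) dx is differentiable in t and M′(t) = p ∫₀^{2π} (y_x(t, x))² · (y(t, x))^{p−1} dx for all t ∈ ℝ. -/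
section aux

variable {y : ℝ × ℝ → ℝ}

lemma slice_t (x t : ℝ) : HasDerivAt (fun s : ℝ => ((s, x) : ℝ × ℝ)) (1, 0) t :=
  HasDerivAt.prodMk (hasDerivAt_id t) (hasDerivAt_const t x)

lemma slice_x (t x : ℝ) : HasDerivAt (fun u : ℝ => ((t, u) : ℝ × ℝ)) (0, 1) x :=
  HasDerivAt.prodMk (hasDerivAt_const x t) (hasDerivAt_id x)

lemma hasDerivAt_ptime (hy : ContDiff ℝ (⊤ : ℕ∞) y) (t x : ℝ) :
    HasDerivAt (fun s => y (s, x)) (fderiv ℝ y (t, x) (1, 0)) t :=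
  ((hy.differentiable (by simp) (t, x)).hasFDerivAt).comp_hasDerivAt t (slice_t x t)

lemma hasDerivAt_pspace (hy : ContDiff ℝ (⊤ : ℕ∞) y) (t x : ℝ) :
    HasDerivAt (fun u => y (t, u)) (fderiv ℝ y (t, x) (0, 1)) x :=
  ((hy.differentiable (by simp) (t, x)).hasFDerivAt).comp_hasDerivAt x (slice_x t x)

lemma ptime_eq (hy : ContDiff ℝ (⊤ : ℕ∞) y) (t x : ℝ) :
    ptime y t x = fderiv ℝ y (t, x) (1, 0) := (hasDerivAt_ptime hy t x).deriv

lemma pspace_eq (hy : ContDiff ℝ (⊤ : ℕ∞) y) (t x : ℝ) :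
    pspace y t x = fderiv ℝ y (t, x) (0, 1) := (hasDerivAt_pspace hy t x).deriv

lemma contDiff_A (hy : ContDiff ℝ (⊤ : ℕ∞) y) : ContDiff ℝ (⊤ : ℕ∞) (fderiv ℝ y) :=
  hy.fderiv_right (by simp)

lemma hasDerivAt_A_t (hy : ContDiff ℝ (⊤ : ℕ∞) y) (t x : ℝ) (v : ℝ × ℝ) :
    HasDerivAt (fun s => fderiv ℝ y (s, x) v)
      (fderiv ℝ (fderiv ℝ y) (t, x) (1, 0) v) t := by
  have h1 : HasDerivAt (fun s => fderiv ℝ y (s, x))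
      (fderiv ℝ (fderiv ℝ y) (t, x) (1, 0)) t :=
    (((contDiff_A hy).differentiable (by simp) (t, x)).hasFDerivAt).comp_hasDerivAt t (slice_t x t)
  exact ((ContinuousLinearMap.apply ℝ ℝ v).hasFDerivAt).comp_hasDerivAt t h1

lemma hasDerivAt_A_x (hy : ContDiff ℝ (⊤ : ℕ∞) y) (t x : ℝ) (v : ℝ × ℝ) :
    HasDerivAt (fun u => fderiv ℝ y (t, u) v)
      (fderiv ℝ (fderiv ℝ y) (t, x) (0, 1) v) x := by
  have h1 : HasDerivAt (fun u => fderiv ℝ y (t, u))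
      (fderiv ℝ (fderiv ℝ y) (t, x) (0, 1)) x :=
    (((contDiff_A hy).differentiable (by simp) (t, x)).hasFDerivAt).comp_hasDerivAt x (slice_x t x)
  exact ((ContinuousLinearMap.apply ℝ ℝ v).hasFDerivAt).comp_hasDerivAt x h1

lemma clairaut (hy : ContDiff ℝ (⊤ : ℕ∞) y) (q : ℝ × ℝ) (v w : ℝ × ℝ) :
    fderiv ℝ (fderiv ℝ y) q v w = fderiv ℝ (fderiv ℝ y) q w v :=
  second_derivative_symmetric (fun z => (hy.differentiable (by simp) z).hasFDerivAt)
    (((contDiff_A hy).differentiable (by simp) q).hasFDerivAt) v w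

lemma ptime2_eq (hy : ContDiff ℝ (⊤ : ℕ∞) y) (t x : ℝ) :
    ptime2 y t x = fderiv ℝ (fderiv ℝ y) (t, x) (1, 0) (1, 0) := by
  have h : (fun s => ptime y s x) = fun s => fderiv ℝ y (s, x) (1, 0) :=
    funext fun s => ptime_eq hy s x
  rw [ptime2, h]
  exact (hasDerivAt_A_t hy t x (1, 0)).deriv

lemma pspace2_eq (hy : ContDiff ℝ (⊤ : ℕ∞) y) (t x : ℝ) :
    pspace2 y t x = fderiv ℝ (fderiv ℝ y) (t, x) (0, 1) (0, 1) := by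
  have h : (fun u => pspace y t u) = fun u => fderiv ℝ y (t, u) (0, 1) :=
    funext fun u => pspace_eq hy t u
  rw [pspace2, h]
  exact (hasDerivAt_A_x hy t x (0, 1)).deriv

lemma continuous_A_apply (hy : ContDiff ℝ (⊤ : ℕ∞) y) (v : ℝ × ℝ) :
    Continuous (fun q : ℝ × ℝ => fderiv ℝ y q v) :=
  (contDiff_A hy).continuous.clm_apply continuous_const

lemma contDiff_B (hy : ContDiff ℝ (⊤ : ℕ∞) y) : ContDiff ℝ (⊤ : ℕ∞) (fderiv ℝ (fderiv ℝ y)) :=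
  (contDiff_A hy).fderiv_right (by simp)

lemma continuous_B_apply (hy : ContDiff ℝ (⊤ : ℕ∞) y) (v w : ℝ × ℝ) :
    Continuous (fun q : ℝ × ℝ => fderiv ℝ (fderiv ℝ y) q v w) :=
  (((contDiff_B hy).continuous.clm_apply continuous_const).clm_apply continuous_const)

end aux

/-- Lyapunov function computation for `y_tt - y_xx = ∂_x(y^p) + f(y)`: the momentum
`M(t) = ∫₀^{2π} y_x y_t dx` is differentiable with
`M'(t) = p ∫₀^{2π} y_x² y^{p-1} dx`. -/
theorem momentum_derivative_dx_yp
    (p : ℕ) (hp0 : 0 < p)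
    (f : ℝ → ℝ) (hf : Continuous f)
    (y : ℝ × ℝ → ℝ) (hy : ContDiff ℝ (⊤ : ℕ∞) y)
    (hper : ∀ t x : ℝ, y (t, x + 2 * Real.pi) = y (t, x))
    (heq : ∀ t x : ℝ,
      ptime2 y t x - pspace2 y t x
        = (p : ℝ) * (y (t, x)) ^ (p - 1) * pspace y t x + f (y (t, x))) :
    ∀ t : ℝ,
      HasDerivAt (fun s => ∫ x in (0:ℝ)..(2 * Real.pi), pspace y s x * ptime y s x)
        ((p : ℝ) * ∫ x in (0:ℝ)..(2 * Real.pi),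
          (pspace y t x) ^ 2 * (y (t, x)) ^ (p - 1)) t := by
  intro t
  set π := Real.pi
  -- the t-derivative of the integrand
  set F' : ℝ → ℝ → ℝ := fun s x =>
    fderiv ℝ (fderiv ℝ y) (s, x) (1, 0) (0, 1) * fderiv ℝ y (s, x) (1, 0) +
      fderiv ℝ y (s, x) (0, 1) * fderiv ℝ (fderiv ℝ y) (s, x) (1, 0) (1, 0) with hF'
  have contF' : Continuous (fun q : ℝ × ℝ => F' q.1 q.2) := by
    exact ((continuous_B_apply hy (1,0) (0,1)).mul (continuous_A_apply hy (1,0))).add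
      ((continuous_A_apply hy (0,1)).mul (continuous_B_apply hy (1,0) (1,0)))
  have contF : Continuous (fun q : ℝ × ℝ => pspace y q.1 q.2 * ptime y q.1 q.2) := by
    have h : (fun q : ℝ × ℝ => pspace y q.1 q.2 * ptime y q.1 q.2)
        = fun q : ℝ × ℝ => fderiv ℝ y q (0, 1) * fderiv ℝ y q (1, 0) := by
      funext q
      rw [pspace_eq hy, ptime_eq hy]
    rw [h]
    exact (continuous_A_apply hy (0,1)).mul (continuous_A_apply hy (1,0))
  have hpt_c : Continuous fun x : ℝ => ptime y t x := by
    have h : (fun x : ℝ => ptime y t x) = fun x => fderiv ℝ y (t, x) (1, 0) :=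
      funext fun u => ptime_eq hy t u
    rw [h]
    exact (continuous_A_apply hy (1,0)).comp (continuous_const.prodMk continuous_id)
  have hps_c : Continuous fun x : ℝ => pspace y t x := by
    have h : (fun x : ℝ => pspace y t x) = fun x => fderiv ℝ y (t, x) (0, 1) :=
      funext fun u => pspace_eq hy t u
    rw [h]
    exact (continuous_A_apply hy (0,1)).comp (continuous_const.prodMk continuous_id)
  have hyx_c : Continuous fun x : ℝ => y (t, x) :=
    hy.continuous.comp (continuous_const.prodMk continuous_id)
  have hB21_c : Continuous fun x : ℝ => fderiv ℝ (fderiv ℝ y) (t, x) (0, 1) (1, 0) :=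
    (continuous_B_apply hy (0,1) (1,0)).comp (continuous_const.prodMk continuous_id)
  have hB22_c : Continuous fun x : ℝ => fderiv ℝ (fderiv ℝ y) (t, x) (0, 1) (0, 1) :=
    (continuous_B_apply hy (0,1) (0,1)).comp (continuous_const.prodMk continuous_id)
  have h_diff : ∀ (s x : ℝ),
      HasDerivAt (fun s => pspace y s x * ptime y s x) (F' s x) s := by
    intro s x
    have h : (fun s => pspace y s x * ptime y s x)
        = fun s => fderiv ℝ y (s, x) (0, 1) * fderiv ℝ y (s, x) (1, 0) := by
      funext s; rw [pspace_eq hy, ptime_eq hy]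
    rw [h]
    exact (hasDerivAt_A_t hy s x (0,1)).mul (hasDerivAt_A_t hy s x (1,0))
  -- bound on a compact neighborhood
  obtain ⟨C, hC⟩ := (isCompact_Icc.prod isCompact_uIcc :
      IsCompact (Set.Icc (t - 1) (t + 1) ×ˢ Set.uIcc (0:ℝ) (2 * π))).exists_bound_of_continuousOn
    contF'.continuousOn
  have h_bound : ∀ᵐ x ∂MeasureTheory.volume, x ∈ Set.uIoc (0:ℝ) (2 * π) →
      ∀ s ∈ Metric.ball t 1, ‖F' s x‖ ≤ C := by
    refine Filter.Eventually.of_forall (fun x hx s hs => ?_)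
    refine hC (s, x) ⟨?_, Set.uIoc_subset_uIcc hx⟩
    rw [Real.ball_eq_Ioo] at hs
    exact Set.Ioo_subset_Icc_self hs
  have main := intervalIntegral.hasDerivAt_integral_of_dominated_loc_of_deriv_le
    (μ := MeasureTheory.volume) (F := fun s x => pspace y s x * ptime y s x) (F' := F')
    (x₀ := t) (a := 0) (b := 2 * π) (bound := fun _ => C) (Metric.ball_mem_nhds t one_pos)
    (Filter.Eventually.of_forall fun s =>
      ((contF.comp (continuous_const.prodMk continuous_id)).aestronglyMeasurable).restrict)
    ((contF.comp (continuous_const.prodMk continuous_id)).intervalIntegrable 0 (2 * π))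
    ((contF'.comp (continuous_const.prodMk continuous_id)).aestronglyMeasurable).restrict
    h_bound
    (intervalIntegrable_const)
    (Filter.Eventually.of_forall fun x _ s _ => h_diff s x)
  refine main.2.congr_deriv (Eq.symm ?_)
  -- now compute the integral of F' t
  -- antiderivative of f
  set F0 : ℝ → ℝ := fun u => ∫ v in (0:ℝ)..u, f v with hF0def
  have hF0 : ∀ u : ℝ, HasDerivAt F0 (f u) u := fun u =>
    (hf.integral_hasStrictDerivAt 0 u).hasDerivAt
  set g : ℝ → ℝ := fun x => ptime y t x * ptime y t x / 2 + pspace y t x * pspace y t x / 2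
      + F0 (y (t, x)) with hgdef
  set D : ℝ → ℝ := fun x =>
    ptime y t x * fderiv ℝ (fderiv ℝ y) (t, x) (0, 1) (1, 0) +
      pspace y t x * fderiv ℝ (fderiv ℝ y) (t, x) (0, 1) (0, 1) +
      f (y (t, x)) * pspace y t x with hDdef
  have hpt : ∀ x : ℝ, HasDerivAt (fun u => ptime y t u)
      (fderiv ℝ (fderiv ℝ y) (t, x) (0, 1) (1, 0)) x := by
    intro x
    have h : (fun u => ptime y t u) = fun u => fderiv ℝ y (t, u) (1, 0) :=
      funext fun u => ptime_eq hy t u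
    rw [h]; exact hasDerivAt_A_x hy t x (1, 0)
  have hps : ∀ x : ℝ, HasDerivAt (fun u => pspace y t u)
      (fderiv ℝ (fderiv ℝ y) (t, x) (0, 1) (0, 1)) x := by
    intro x
    have h : (fun u => pspace y t u) = fun u => fderiv ℝ y (t, u) (0, 1) :=
      funext fun u => pspace_eq hy t u
    rw [h]; exact hasDerivAt_A_x hy t x (0, 1)
  have hg : ∀ x : ℝ, HasDerivAt g (D x) x := by
    intro x
    have hcomp : HasDerivAt (fun u => F0 (y (t, u))) (f (y (t, x)) * pspace y t x) x := by
      have := (hF0 (y (t, x))).comp x ((hasDerivAt_pspace hy t x))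
      rw [pspace_eq hy]
      exact this
    have h := ((((hpt x).mul (hpt x)).div_const 2).add
      (((hps x).mul (hps x)).div_const 2)).add hcomp
    convert h using 1
    · rfl
    · rfl
    · rfl
    simp only [hDdef]
    ring
  have hDcont : Continuous D := by
    rw [hDdef]
    exact ((hpt_c.mul hB21_c).add (hps_c.mul hB22_c)).add ((hf.comp hyx_c).mul hps_c)
  have hintD : ∫ x in (0:ℝ)..(2 * π), D x = g (2 * π) - g 0 :=
    intervalIntegral.integral_eq_sub_of_hasDerivAt (fun x _ => hg x)
      (hDcont.intervalIntegrable 0 (2 * π))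
  -- periodicity : g (2π) = g 0
  have hy_per : ∀ s : ℝ, y (s, 2 * π) = y (s, 0) := by
    intro s; have := hper s 0; rwa [zero_add] at this
  have hpt_per : ptime y t (2 * π) = ptime y t 0 := by
    unfold ptime
    congr 1
    exact funext fun s => hy_per s
  have hps_per : pspace y t (2 * π) = pspace y t 0 := by
    have h1 : HasDerivAt (fun u : ℝ => y (t, u + 2 * π))
        (fderiv ℝ y (t, 2 * π) (0, 1)) 0 := by
      have h0 : HasDerivAt (fun u : ℝ => u + 2 * π) 1 0 :=
        (hasDerivAt_id 0).add_const _
      have hout : HasDerivAt (fun u => y (t, u)) (fderiv ℝ y (t, 2 * π) (0, 1)) (0 + 2 * π) := by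
        rw [zero_add]; exact hasDerivAt_pspace hy t (2 * π)
      have := hout.scomp 0 h0
      rw [one_smul] at this
      exact this
    have h2 : (fun u : ℝ => y (t, u + 2 * π)) = fun u => y (t, u) :=
      funext fun u => hper t u
    rw [h2] at h1
    rw [pspace_eq hy t (2 * π), pspace_eq hy t 0]
    exact h1.unique (hasDerivAt_pspace hy t 0)
  have hg_per : g (2 * π) = g 0 := by
    simp only [hgdef, hpt_per, hps_per, hy_per t]
  -- pointwise identity F' t x = D x + p * pspace^2 * y^(p-1)
  have hpoint : ∀ x : ℝ, F' t x
      = D x + (p : ℝ) * ((pspace y t x) ^ 2 * (y (t, x)) ^ (p - 1)) := by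
    intro x
    have hB := clairaut hy (t, x) (1, 0) (0, 1)
    have he := heq t x
    rw [ptime2_eq hy, pspace2_eq hy] at he
    rw [hF', hDdef]
    simp only [ptime_eq hy t x, pspace_eq hy t x] at *
    linear_combination (fderiv ℝ y (t, x) (1, 0)) * hB + (fderiv ℝ y (t, x) (0, 1)) * he
  have hcont2 : Continuous (fun x : ℝ => (pspace y t x) ^ 2 * (y (t, x)) ^ (p - 1)) :=
    (hps_c.pow 2).mul (hyx_c.pow (p - 1))
  calc (p : ℝ) * ∫ x in (0:ℝ)..(2 * π), (pspace y t x) ^ 2 * (y (t, x)) ^ (p - 1)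
      = ∫ x in (0:ℝ)..(2 * π), (p : ℝ) * ((pspace y t x) ^ 2 * (y (t, x)) ^ (p - 1)) := by
        rw [intervalIntegral.integral_const_mul]
    _ = (g (2 * π) - g 0) + ∫ x in (0:ℝ)..(2 * π),
          (p : ℝ) * ((pspace y t x) ^ 2 * (y (t, x)) ^ (p - 1)) := by
        rw [hg_per]; ring
    _ = (∫ x in (0:ℝ)..(2 * π), D x) + ∫ x in (0:ℝ)..(2 * π),
          (p : ℝ) * ((pspace y t x) ^ 2 * (y (t, x)) ^ (p - 1)) := by rw [hintD]
    _ = ∫ x in (0:ℝ)..(2 * π), (D x +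
          (p : ℝ) * ((pspace y t x) ^ 2 * (y (t, x)) ^ (p - 1))) := by
        exact (intervalIntegral.integral_add (hDcont.intervalIntegrable 0 (2 * π))
          ((continuous_const.mul hcont2 : Continuous fun x : ℝ =>
            (p : ℝ) * ((pspace y t x) ^ 2 * (y (t, x)) ^ (p - 1))).intervalIntegrable 0 (2 * π))).symm
    _ = ∫ x in (0:ℝ)..(2 * π), F' t x := by
        refine intervalIntegral.integral_congr fun x _ => ?_
        rw [hpoint x]
end

section
/- Let v : ℝ → ℝ be differentiable on all of ℝ and satisfy v′(t) ≥ (v(t))² for every t ∈ ℝ. Then v ≡ 0. -/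
/-! If `v' ≥ v²` and `v(a) > 0`, then `-1/v(t) - t` is nondecreasing for `t ≥ a`, so `1/v` drops
by at least `t - a` and `v` would blow up before time `a + 1/v(a)`. Hence a global solution is
`≤ 0`; applying this to the solution `t ↦ -v(-t)` of the same inequality gives `v ≥ 0`. -/

open Set

variable {v : ℝ → ℝ}

lemma monotone_of_sq_le_deriv (hv : Differentiable ℝ v) (h : ∀ t, v t ^ 2 ≤ deriv v t) :
    Monotone v :=
  monotone_of_deriv_nonneg hv fun t => (sq_nonneg _).trans (h t)

lemma sub_le_inv_sub_inv_of_sq_le_deriv (hv : Differentiable ℝ v)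
    (h : ∀ t, v t ^ 2 ≤ deriv v t) {a b : ℝ} (ha : 0 < v a) (hab : a ≤ b) :
    b - a ≤ (v a)⁻¹ - (v b)⁻¹ := by
  have hpos : ∀ t ∈ Ici a, 0 < v t := fun t ht =>
    ha.trans_le (monotone_of_sq_le_deriv hv h ht)
  have hderiv : ∀ t ∈ Ici a,
      HasDerivAt (fun s => -(v s)⁻¹ - s) (-(-deriv v t / v t ^ 2) - 1) t := fun t ht =>
    (((hv t).hasDerivAt.inv (hpos t ht).ne').neg).sub (hasDerivAt_id t)
  have hmono : MonotoneOn (fun s => -(v s)⁻¹ - s) (Ici a) := by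
    refine monotoneOn_of_hasDerivWithinAt_nonneg (convex_Ici a)
      (fun t ht => (hderiv t ht).continuousAt.continuousWithinAt)
      (fun t ht => (hderiv t (interior_subset ht)).hasDerivWithinAt) fun t ht => ?_
    have ht := hpos t (interior_subset ht)
    have : 1 ≤ deriv v t / v t ^ 2 := (one_le_div (by positivity)).2 (h t)
    linarith [neg_div (v t ^ 2) (deriv v t)]
  linarith [hmono self_mem_Ici hab hab]

lemma nonpos_of_sq_le_deriv (hv : Differentiable ℝ v) (h : ∀ t, v t ^ 2 ≤ deriv v t) (a : ℝ) :
    v a ≤ 0 := by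
  by_contra! ha
  have hab : a ≤ a + (v a)⁻¹ := le_add_of_nonneg_right (inv_pos.2 ha).le
  have hb : 0 < v (a + (v a)⁻¹) := ha.trans_le (monotone_of_sq_le_deriv hv h hab)
  have := sub_le_inv_sub_inv_of_sq_le_deriv hv h ha hab
  linarith [inv_pos.2 hb]

lemma sq_le_deriv_neg_comp_neg (h : ∀ t, v t ^ 2 ≤ deriv v t) (t : ℝ) :
    (-v (-t)) ^ 2 ≤ deriv (fun s => -v (-s)) t := by
  simpa [deriv_comp_neg] using h (-t)

/-- Riccati-type rigidity: a globally defined differentiable function `v : ℝ → ℝ`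
satisfying `v' ≥ v²` everywhere must vanish identically. -/
theorem riccati_rigidity (v : ℝ → ℝ) (hv : Differentiable ℝ v)
    (h : ∀ t : ℝ, (v t) ^ 2 ≤ deriv v t) :
    ∀ t : ℝ, v t = 0 := by
  have hv' : Differentiable ℝ fun s => -v (-s) := (hv.comp differentiable_neg).neg
  intro t
  have hge := nonpos_of_sq_le_deriv hv' (sq_le_deriv_neg_comp_neg h) (-t)
  rw [neg_neg, neg_nonpos] at hge
  exact le_antisymm (nonpos_of_sq_le_deriv hv h t) hge
end

section
/- Let y : ℝ × ℝ → ℝ be smooth, 2π-periodic in x, and satisfy y_tt − y_xx = (y_t)² on ℝ². Define the spatial mean ȳ(t) := (1/2π) ∫₀^{2π} y(t, x) dx. Then ȳ is twice differentiable with ȳ″(t) = (1/2π) ∫₀^{2π} (y_t(t, x))² dx, and consequently ȳ″(t) ≥ (ȳ′(t))² for all t ∈ ℝ. -/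
/-- Spatial mean of `y (t, x)` over one period in `x`. -/
noncomputable def spatialMean (y : ℝ × ℝ → ℝ) (t : ℝ) : ℝ :=
  (1 / (2 * Real.pi)) * ∫ x in (0:ℝ)..(2 * Real.pi), y (t, x)

open MeasureTheory intervalIntegral Metric Set

/-- directional derivative in first coordinate -/
noncomputable def pt (f : ℝ × ℝ → ℝ) (p : ℝ × ℝ) : ℝ := fderiv ℝ f p (1, 0)
noncomputable def ps (f : ℝ × ℝ → ℝ) (p : ℝ × ℝ) : ℝ := fderiv ℝ f p (0, 1)

lemma pt_contDiff {f : ℝ × ℝ → ℝ} (hf : ContDiff ℝ (⊤ : ℕ∞) f) : ContDiff ℝ (⊤ : ℕ∞) (pt f) :=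
  (hf.fderiv_right (by simp)).clm_apply contDiff_const

lemma ps_contDiff {f : ℝ × ℝ → ℝ} (hf : ContDiff ℝ (⊤ : ℕ∞) f) : ContDiff ℝ (⊤ : ℕ∞) (ps f) :=
  (hf.fderiv_right (by simp)).clm_apply contDiff_const

lemma hasDerivAt_pt {f : ℝ × ℝ → ℝ} (hf : ContDiff ℝ (⊤ : ℕ∞) f) (t x : ℝ) :
    HasDerivAt (fun s => f (s, x)) (pt f (t, x)) t := by
  have h1 : HasFDerivAt (fun s : ℝ => (s, x)) ((ContinuousLinearMap.id ℝ ℝ).prod 0) t :=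
    (hasFDerivAt_id t).prodMk (hasFDerivAt_const x t)
  have h2 := ((hf.differentiable (by simp)) (t, x)).hasFDerivAt
  have := (h2.comp t h1).hasDerivAt
  simpa [pt, Function.comp_def] using this

lemma hasDerivAt_ps {f : ℝ × ℝ → ℝ} (hf : ContDiff ℝ (⊤ : ℕ∞) f) (t x : ℝ) :
    HasDerivAt (fun s => f (t, s)) (ps f (t, x)) x := by
  have h1 : HasFDerivAt (fun s : ℝ => (t, s)) ((0 : ℝ →L[ℝ] ℝ).prod (ContinuousLinearMap.id ℝ ℝ)) x :=
    (hasFDerivAt_const t x).prodMk (hasFDerivAt_id x)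
  have h2 := ((hf.differentiable (by simp)) (t, x)).hasFDerivAt
  have := (h2.comp x h1).hasDerivAt
  simpa [ps, Function.comp_def] using this

lemma ptime_eq_s11 {f : ℝ × ℝ → ℝ} (hf : ContDiff ℝ (⊤ : ℕ∞) f) (t x : ℝ) :
    ptime f t x = pt f (t, x) := (hasDerivAt_pt hf t x).deriv

lemma pspace_eq_s11 {f : ℝ × ℝ → ℝ} (hf : ContDiff ℝ (⊤ : ℕ∞) f) (t x : ℝ) :
    pspace f t x = ps f (t, x) := (hasDerivAt_ps hf t x).deriv

lemma ptime2_eq_s11 {f : ℝ × ℝ → ℝ} (hf : ContDiff ℝ (⊤ : ℕ∞) f) (t x : ℝ) :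
    ptime2 f t x = pt (pt f) (t, x) := by
  unfold ptime2
  have : (fun s => ptime f s x) = fun s => pt f (s, x) := funext fun s => ptime_eq_s11 hf s x
  rw [this]
  exact (hasDerivAt_pt (pt_contDiff hf) t x).deriv

lemma pspace2_eq_s11 {f : ℝ × ℝ → ℝ} (hf : ContDiff ℝ (⊤ : ℕ∞) f) (t x : ℝ) :
    pspace2 f t x = ps (ps f) (t, x) := by
  unfold pspace2
  have : (fun s => pspace f t s) = fun s => ps f (t, s) := funext fun s => pspace_eq_s11 hf t s
  rw [this]
  exact (hasDerivAt_ps (ps_contDiff hf) t x).deriv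

/-- differentiation under the interval integral, continuous version -/
lemma hasDerivAt_intervalIntegral {G G' : ℝ × ℝ → ℝ} (hG : Continuous G) (hG' : Continuous G')
    (hd : ∀ t x : ℝ, HasDerivAt (fun s => G (s, x)) (G' (t, x)) t) (a b t₀ : ℝ) :
    HasDerivAt (fun t => ∫ x in a..b, G (t, x)) (∫ x in a..b, G' (t₀, x)) t₀ := by
  obtain ⟨C, hC⟩ := ((isCompact_Icc (a := t₀ - 1) (b := t₀ + 1)).prod
      (isCompact_uIcc (a := a) (b := b))).exists_bound_of_continuousOn hG'.continuousOn
  have key := intervalIntegral.hasDerivAt_integral_of_dominated_loc_of_deriv_le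
      (F := fun t x => G (t, x)) (F' := fun t x => G' (t, x)) (x₀ := t₀)
      (bound := fun _ => C) (μ := MeasureTheory.volume) (a := a) (b := b)
      (s := ball t₀ 1) (ball_mem_nhds t₀ one_pos)
      (Filter.Eventually.of_forall fun t =>
        (hG.comp (Continuous.prodMk_right t)).aestronglyMeasurable)
      ((hG.comp (Continuous.prodMk_right t₀)).intervalIntegrable a b)
      (hG'.comp (Continuous.prodMk_right t₀)).aestronglyMeasurable
      (Filter.Eventually.of_forall fun x hx s hs => by
        have : (s, x) ∈ Icc (t₀ - 1) (t₀ + 1) ×ˢ uIcc a b := by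
          constructor
          · have := abs_lt.1 (by simpa [Real.dist_eq] using mem_ball.1 hs)
            exact ⟨by linarith [this.1], by linarith [this.2]⟩
          · exact uIoc_subset_uIcc hx
        exact hC _ this)
      (intervalIntegrable_const)
      (Filter.Eventually.of_forall fun x _ s _ => hd s x)
  exact key.2
/-- For a smooth, spatially 2π-periodic solution of `y_tt - y_xx = y_t²`, the spatial
mean `ȳ` is twice differentiable, `ȳ'' (t) = (1/2π) ∫₀^{2π} y_t² dx`, and hence
`ȳ'' ≥ (ȳ')²`. -/
theorem spatial_mean_riccati
    (y : ℝ × ℝ → ℝ) (hy : ContDiff ℝ (⊤ : ℕ∞) y)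
    (hper : ∀ t x : ℝ, y (t, x + 2 * Real.pi) = y (t, x))
    (heq : ∀ t x : ℝ, ptime2 y t x - pspace2 y t x = (ptime y t x) ^ 2) :
    (∀ t : ℝ, DifferentiableAt ℝ (spatialMean y) t) ∧
    (∀ t : ℝ, HasDerivAt (deriv (spatialMean y))
        ((1 / (2 * Real.pi)) * ∫ x in (0:ℝ)..(2 * Real.pi), (ptime y t x) ^ 2) t) ∧
    (∀ t : ℝ, (deriv (spatialMean y) t) ^ 2 ≤ deriv (deriv (spatialMean y)) t) := by
  have pi_pos := Real.pi_pos
  set c : ℝ := 1 / (2 * Real.pi) with hc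
  have hc_pos : 0 < c := by positivity
  have hyc : Continuous y := hy.continuous
  have hpt : ContDiff ℝ (⊤ : ℕ∞) (pt y) := pt_contDiff hy
  have hptpt : ContDiff ℝ (⊤ : ℕ∞) (pt (pt y)) := pt_contDiff hpt
  -- first derivative of the integral
  have hA : ∀ t : ℝ, HasDerivAt (fun t => ∫ x in (0:ℝ)..(2 * Real.pi), y (t, x))
      (∫ x in (0:ℝ)..(2 * Real.pi), pt y (t, x)) t := fun t =>
    hasDerivAt_intervalIntegral hyc hpt.continuous (fun t x => hasDerivAt_pt hy t x) 0 _ t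
  have hsm : spatialMean y = fun t => c * ∫ x in (0:ℝ)..(2 * Real.pi), y (t, x) := by
    funext t; rw [spatialMean, hc]
  have hA' : ∀ t : ℝ, HasDerivAt (spatialMean y)
      (c * ∫ x in (0:ℝ)..(2 * Real.pi), pt y (t, x)) t := fun t => by
    rw [hsm]; exact (hA t).const_mul c
  have hderiv1 : deriv (spatialMean y) = fun t => c * ∫ x in (0:ℝ)..(2 * Real.pi), pt y (t, x) :=
    funext fun t => (hA' t).deriv
  -- second derivative of the integral
  have hB : ∀ t : ℝ, HasDerivAt (fun t => ∫ x in (0:ℝ)..(2 * Real.pi), pt y (t, x))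
      (∫ x in (0:ℝ)..(2 * Real.pi), pt (pt y) (t, x)) t := fun t =>
    hasDerivAt_intervalIntegral hpt.continuous hptpt.continuous
      (fun t x => hasDerivAt_pt hpt t x) 0 _ t
  -- the spatial second derivative integrates to zero by periodicity
  have hps_per : ∀ t x : ℝ, pspace y t (x + 2 * Real.pi) = pspace y t x := by
    intro t x
    have h1 : (fun s => y (t, s + 2 * Real.pi)) = fun s => y (t, s) :=
      funext fun s => hper t s
    unfold pspace
    rw [← deriv_comp_add_const (fun s => y (t, s)) (2 * Real.pi) x, h1]
  have hint_ps2 : ∀ t : ℝ, (∫ x in (0:ℝ)..(2 * Real.pi), pspace2 y t x) = 0 := by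
    intro t
    have hd : ∀ x ∈ uIcc (0:ℝ) (2 * Real.pi), DifferentiableAt ℝ (fun s => pspace y t s) x := by
      intro x _
      have : (fun s => pspace y t s) = fun s => ps y (t, s) := funext fun s => pspace_eq_s11 hy t s
      rw [this]
      exact (hasDerivAt_ps (ps_contDiff hy) t x).differentiableAt
    have hcont : Continuous (fun x => pspace2 y t x) := by
      have : (fun x => pspace2 y t x) = fun x => ps (ps y) (t, x) :=
        funext fun x => pspace2_eq_s11 hy t x
      rw [this]
      exact (ps_contDiff (ps_contDiff hy)).continuous.comp (Continuous.prodMk_right t)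
    have := intervalIntegral.integral_deriv_eq_sub (f := fun s => pspace y t s)
      (a := 0) (b := 2 * Real.pi) hd (hcont.intervalIntegrable _ _)
    rw [show deriv (fun s => pspace y t s) = fun x => pspace2 y t x from rfl] at this
    rw [this]
    show pspace y t (2 * Real.pi) - pspace y t 0 = 0
    have h2 := hps_per t 0
    simp only [zero_add] at h2
    rw [h2, sub_self]
  -- rewrite the second-derivative integrand
  have hint2 : ∀ t : ℝ, (∫ x in (0:ℝ)..(2 * Real.pi), pt (pt y) (t, x))
      = ∫ x in (0:ℝ)..(2 * Real.pi), (ptime y t x) ^ 2 := by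
    intro t
    have h1 : ∀ x : ℝ, pt (pt y) (t, x) = pspace2 y t x + (ptime y t x) ^ 2 := by
      intro x
      have := heq t x
      rw [ptime2_eq_s11 hy t x] at this
      linarith
    have hcont_ps2 : Continuous (fun x => pspace2 y t x) := by
      have : (fun x => pspace2 y t x) = fun x => ps (ps y) (t, x) :=
        funext fun x => pspace2_eq_s11 hy t x
      rw [this]
      exact (ps_contDiff (ps_contDiff hy)).continuous.comp (Continuous.prodMk_right t)
    have hcont_pt : Continuous (fun x => (ptime y t x) ^ 2) := by
      have : (fun x => (ptime y t x) ^ 2) = fun x => (pt y (t, x)) ^ 2 := by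
        funext x; rw [ptime_eq_s11 hy t x]
      rw [this]
      exact (hpt.continuous.comp (Continuous.prodMk_right t)).pow 2
    calc (∫ x in (0:ℝ)..(2 * Real.pi), pt (pt y) (t, x))
        = ∫ x in (0:ℝ)..(2 * Real.pi), (pspace2 y t x + (ptime y t x) ^ 2) := by
          exact intervalIntegral.integral_congr fun x _ => h1 x
      _ = (∫ x in (0:ℝ)..(2 * Real.pi), pspace2 y t x)
          + ∫ x in (0:ℝ)..(2 * Real.pi), (ptime y t x) ^ 2 :=
          intervalIntegral.integral_add (hcont_ps2.intervalIntegrable _ _)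
            (hcont_pt.intervalIntegrable _ _)
      _ = ∫ x in (0:ℝ)..(2 * Real.pi), (ptime y t x) ^ 2 := by rw [hint_ps2 t, zero_add]
  have hB' : ∀ t : ℝ, HasDerivAt (deriv (spatialMean y))
      (c * ∫ x in (0:ℝ)..(2 * Real.pi), (ptime y t x) ^ 2) t := by
    intro t
    rw [hderiv1, ← hint2 t]
    exact (hB t).const_mul c
  refine ⟨fun t => (hA' t).differentiableAt, fun t => hB' t, fun t => ?_⟩
  -- Cauchy–Schwarz
  have hd2 : deriv (deriv (spatialMean y)) t
      = c * ∫ x in (0:ℝ)..(2 * Real.pi), (ptime y t x) ^ 2 := (hB' t).deriv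
  have hd1 : deriv (spatialMean y) t = c * ∫ x in (0:ℝ)..(2 * Real.pi), ptime y t x := by
    rw [hderiv1]
    show c * (∫ x in (0:ℝ)..(2 * Real.pi), pt y (t, x)) = _
    exact congrArg (fun z => c * z)
      (intervalIntegral.integral_congr fun x _ => (ptime_eq_s11 hy t x).symm)
  rw [hd1, hd2]
  set f : ℝ → ℝ := fun x => ptime y t x with hf
  have hfc : Continuous f := by
    have : f = fun x => pt y (t, x) := funext fun x => ptime_eq_s11 hy t x
    rw [this]; exact hpt.continuous.comp (Continuous.prodMk_right t)
  set A : ℝ := ∫ x in (0:ℝ)..(2 * Real.pi), f x with hA_def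
  set B : ℝ := ∫ x in (0:ℝ)..(2 * Real.pi), f x ^ 2 with hB_def
  have key : A ^ 2 ≤ 2 * Real.pi * B := by
    set a : ℝ := A / (2 * Real.pi) with ha
    have h0 : (0:ℝ) ≤ ∫ x in (0:ℝ)..(2 * Real.pi), (f x - a) ^ 2 :=
      intervalIntegral.integral_nonneg (by positivity) (fun x _ => sq_nonneg _)
    have hexp : (∫ x in (0:ℝ)..(2 * Real.pi), (f x - a) ^ 2)
        = B - 2 * a * A + a ^ 2 * (2 * Real.pi) := by
      have h1 : ∀ x : ℝ, (f x - a) ^ 2 = f x ^ 2 - 2 * a * f x + a ^ 2 := fun x => by ring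
      rw [intervalIntegral.integral_congr (fun x _ => h1 x)]
      rw [intervalIntegral.integral_add (f := fun x => f x ^ 2 - 2 * a * f x) (g := fun _ => a ^ 2) (((hfc.pow 2 : Continuous fun x => f x ^ 2).intervalIntegrable _ _).sub
            ((hfc.intervalIntegrable _ _).const_mul _)) (intervalIntegrable_const),
          intervalIntegral.integral_sub (f := fun x => f x ^ 2) (g := fun x => 2 * a * f x) ((hfc.pow 2 : Continuous fun x => f x ^ 2).intervalIntegrable _ _)
            ((hfc.intervalIntegrable _ _).const_mul _),
          intervalIntegral.integral_const_mul, intervalIntegral.integral_const]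
      simp only [← hB_def, ← hA_def, smul_eq_mul, sub_zero]
      ring
    rw [hexp] at h0
    have ha' : a * (2 * Real.pi) = A := by
      rw [ha]; field_simp
    have h0m : 0 ≤ (2 * Real.pi) * (B - 2 * a * A + a ^ 2 * (2 * Real.pi)) :=
      mul_nonneg (by positivity) h0
    have hexpand : (2 * Real.pi) * (B - 2 * a * A + a ^ 2 * (2 * Real.pi))
        = 2 * Real.pi * B - 2 * (a * (2 * Real.pi)) * A + (a * (2 * Real.pi)) ^ 2 := by ring
    rw [hexpand, ha'] at h0m
    nlinarith [h0m]
  have hcc : c * (2 * Real.pi) = 1 := by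
    rw [hc]; field_simp
  have step : c ^ 2 * A ^ 2 ≤ c ^ 2 * (2 * Real.pi * B) :=
    mul_le_mul_of_nonneg_left key (sq_nonneg c)
  have e1 : c ^ 2 * (2 * Real.pi * B) = c * B := by
    calc c ^ 2 * (2 * Real.pi * B) = (c * (2 * Real.pi)) * (c * B) := by ring
      _ = c * B := by rw [hcc, one_mul]
  have e2 : (c * A) ^ 2 = c ^ 2 * A ^ 2 := by ring
  linarith
end

section
/- There exists an absolute constant c★ > 0 with the following property. For every m ∈ (0, ∞), set λ_j := √(j² + m) for j ∈ ℤ and ⟨j⟩ := max{|j|, 1}. Let j₁, j₂, j₃, j₄ ∈ ℤ and σ₁, σ₂, σ₃, σ₄ ∈ {+1, −1} satisfy σ₁j₁ + σ₂j₂ + σ₃j₃ + σ₄j₄ = 0, and suppose there is NO permutation τ of {1, 2, 3, 4} such that j_{τ(1)} = j_{τ(2)}, j_{τ(3)} = j_{τ(4)}, σ_{τ(1)} = −σ_{τ(2)} and σ_{τ(3)} = −σ_{τ(4)}. Then |σ₁λ_{j₁} + σ₂λ_{j₂} + σ₃λ_{j₃} + σ₄λ_{j₄}| ≥ c★ ·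 m / (n₀² + m)^{3/2} > 0, where n₀ := min{⟨j₁⟩, ⟨j₂⟩, ⟨j₃⟩, ⟨j₄⟩}. -/
set_option maxHeartbeats 1600000

/-- `⟨j⟩ = max {|j|, 1}` as a real number. -/
noncomputable def jnorm (j : ℤ) : ℝ := max |(j : ℝ)| 1

/-- `n₀ = min {⟨j₁⟩, ⟨j₂⟩, ⟨j₃⟩, ⟨j₄⟩}`. -/
noncomputable def nmin (j : Fin 4 → ℤ) : ℝ :=
  min (min (jnorm (j 0)) (jnorm (j 1))) (min (jnorm (j 2)) (jnorm (j 3)))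

namespace SmallDiv

noncomputable def KG (m x : ℝ) : ℝ := Real.sqrt (x ^ 2 + m)

section basic
variable {m : ℝ} (hm : 0 < m)
include hm

lemma KG_sq (x : ℝ) : KG m x ^ 2 = x ^ 2 + m := by
  rw [KG, Real.sq_sqrt]; nlinarith [sq_nonneg x]

lemma KG_pos (x : ℝ) : 0 < KG m x := Real.sqrt_pos.2 (by nlinarith [sq_nonneg x])

lemma abs_le_KG (x : ℝ) : |x| ≤ KG m x := by
  rw [KG, ← Real.sqrt_sq_eq_abs]
  exact Real.sqrt_le_sqrt (by nlinarith)

lemma KG_prod (x y : ℝ) : x * y + m ≤ KG m x * KG m y := by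
  have h1 : KG m x * KG m y = Real.sqrt ((x ^ 2 + m) * (y ^ 2 + m)) :=
    (Real.sqrt_mul (by nlinarith [sq_nonneg x]) _).symm
  calc x * y + m ≤ |x * y + m| := le_abs_self _
    _ = Real.sqrt ((x * y + m) ^ 2) := (Real.sqrt_sq_eq_abs _).symm
    _ ≤ Real.sqrt ((x ^ 2 + m) * (y ^ 2 + m)) :=
        Real.sqrt_le_sqrt (by nlinarith [sq_nonneg (x - y), sq_nonneg (x*y), hm.le])
    _ = KG m x * KG m y := h1.symm

lemma PhiMono {x x' : ℝ} (y : ℝ) (h : x ≤ x') :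
    (x + y) * (KG m x' + KG m y) ≤ (x' + y) * (KG m x + KG m y) := by
  have h1 := KG_prod hm x x'
  have h2 := KG_prod hm x y
  have h3 := KG_prod hm x' y
  have p1 := KG_pos hm x
  have p2 := KG_pos hm x'
  have p3 := KG_pos hm y
  have s1 := KG_sq hm x
  have s2 := KG_sq hm x'
  have key : ((x'+y)*(KG m x + KG m y) - (x+y)*(KG m x' + KG m y)) * (KG m x + KG m x')
      = (x'-x)*((KG m x * KG m x' - (x*x'+m)) + (KG m x * KG m y - (x*y+m))
        + (KG m x' * KG m y - (x'*y+m)) + 4*m) := by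
    linear_combination (x'+y)*s1 - (x+y)*s2
  have hbr : 0 ≤ (KG m x * KG m x' - (x*x'+m)) + (KG m x * KG m y - (x*y+m))
        + (KG m x' * KG m y - (x'*y+m)) + 4*m := by nlinarith
  have h6 : 0 ≤ ((x'+y)*(KG m x + KG m y) - (x+y)*(KG m x' + KG m y)) * (KG m x + KG m x') := by
    rw [key]; exact mul_nonneg (by linarith) hbr
  nlinarith [h6, add_pos p1 p2]

lemma fourpoint {p q p' q' : ℝ} (h1 : q ≤ q') (h2 : q' ≤ p') (h3 : p' ≤ p)
    (hsum : p + q = p' + q') : KG m p' + KG m q' ≤ KG m p + KG m q := by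
  have A := PhiMono hm (x := q) (x' := p') q' (by linarith)
  have B := PhiMono hm (x := q') (x' := p) p' (by linarith)
  have pp := KG_pos hm p; have pp' := KG_pos hm p'
  have pq := KG_pos hm q; have pq' := KG_pos hm q'
  have sp := KG_sq hm p; have sp' := KG_sq hm p'
  have sq := KG_sq hm q; have sq' := KG_sq hm q'
  have hmid : 0 < KG m p' + KG m q' := by linarith
  have key : (q + q') * (KG m p + KG m p') ≤ (p + p') * (KG m q + KG m q') := by
    have hA : (q + q') * (KG m p' + KG m q') ≤ (p' + q') * (KG m q + KG m q') := A
    have hB : (p' + q') * (KG m p + KG m p') ≤ (p + p') * (KG m q' + KG m p') := by linarith [B]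
    have t1 : (q + q') * (KG m p + KG m p') * (KG m p' + KG m q')
        ≤ (p + p') * (KG m q + KG m q') * (KG m p' + KG m q') := by
      nlinarith [mul_le_mul_of_nonneg_left hA (le_of_lt (by linarith : (0:ℝ) < KG m p + KG m p')),
        mul_le_mul_of_nonneg_left hB (le_of_lt (by linarith : (0:ℝ) < KG m q + KG m q'))]
    exact le_of_mul_le_mul_right t1 hmid
  have hδ : 0 ≤ p - p' := by linarith
  have hG : 0 ≤ (KG m p + KG m q - KG m p' - KG m q') * ((KG m p + KG m p') * (KG m q + KG m q')) := by
    have e : (KG m p + KG m q - KG m p' - KG m q') * ((KG m p + KG m p') * (KG m q + KG m q'))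
        = (p - p') * ((p + p') * (KG m q + KG m q') - (q + q') * (KG m p + KG m p')) := by
      linear_combination (KG m q + KG m q')*sp - (KG m q + KG m q')*sp'
        + (KG m p + KG m p')*sq - (KG m p + KG m p')*sq'
        + ((KG m p + KG m p') * (q' + q)) * hsum
    rw [e]; exact mul_nonneg hδ (by linarith)
  nlinarith [hG, mul_pos (by linarith : (0:ℝ) < KG m p + KG m p')
    (by linarith : (0:ℝ) < KG m q + KG m q')]

lemma hmono {u v t : ℝ} (huv : u ≤ v) (ht : 0 ≤ t) :
    KG m (u + t) - KG m u ≤ KG m (v + t) - KG m v := by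
  rcases le_total (u + t) v with h | h
  · have := fourpoint hm (q := u) (q' := u + t) (p' := v) (p := v + t)
      (by linarith) h (by linarith) (by ring)
    linarith
  · have := fourpoint hm (q := u) (q' := v) (p' := u + t) (p := v + t)
      huv h (by linarith) (by ring)
    linarith

lemma chain {p q r s w : ℝ} (hq : q ≤ s) (hs : s ≤ r) (hr : r ≤ p)
    (hsum : p + q = r + s) (ht : 1 ≤ p - r) (hw1 : q ≤ w) (hw2 : w + 2 ≤ p) :
    KG m (w + 2) + KG m w - 2 * KG m (w + 1) ≤ KG m p + KG m q - KG m r - KG m s := by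
  set t := p - r with htdef
  have hts : s = q + t := by rw [htdef]; linarith
  have hp : p = r + t := by rw [htdef]; ring
  set x := max q (w - t + 1) with hx
  have hqx : q ≤ x := le_max_left _ _
  have hxw : x ≤ w := max_le hw1 (by linarith)
  have hx1r : x + 1 ≤ r := by
    have h1 : q + 1 ≤ r := by linarith
    have h2 : w - t + 2 ≤ r := by linarith
    rcases max_choice q (w - t + 1) with h | h <;> rw [hx, h] <;> linarith
  have hwx : w + 1 ≤ x + t := by
    have := le_max_right q (w - t + 1); linarith
  have A1 : KG m (q + t) - KG m q ≤ KG m (x + t) - KG m x := hmono hm hqx (by linarith)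
  have A2 : KG m ((x + 1) + t) - KG m (x + 1) ≤ KG m (r + t) - KG m r :=
    hmono hm hx1r (by linarith)
  have A3 : KG m ((w + 1) + 1) - KG m (w + 1) ≤ KG m ((x + t) + 1) - KG m (x + t) :=
    hmono hm hwx (by norm_num)
  have A4 : KG m (x + 1) - KG m x ≤ KG m (w + 1) - KG m w := hmono hm hxw (by norm_num)
  have e1 : (x + 1) + t = (x + t) + 1 := by ring
  have e2 : (w + 1) + 1 = w + 2 := by ring
  rw [e1] at A2; rw [e2] at A3
  rw [hp, hts]
  linarith

lemma secondDiff {y N : ℝ} (hN : 1 ≤ N) (hy : y ^ 2 ≤ 9 * N ^ 2) :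
    m / (81 * ((N ^ 2 + m) * Real.sqrt (N ^ 2 + m)))
      ≤ KG m (y + 1) + KG m (y - 1) - 2 * KG m y := by
  set Z := N ^ 2 + m with hZdef
  have hZ1 : 1 ≤ Z := by nlinarith
  have hZpos : 0 < Z := by linarith
  set sZ := Real.sqrt Z with hsZdef
  have hsZsq : sZ ^ 2 = Z := Real.sq_sqrt hZpos.le
  have hsZ1 : 1 ≤ sZ := by nlinarith [Real.sqrt_nonneg Z]
  set Q : ℝ := y ^ 2 + m - 1 with hQdef
  set R := Real.sqrt (Q ^ 2 + 4 * m) with hRdef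
  have hRsq : R ^ 2 = Q ^ 2 + 4 * m := Real.sq_sqrt (by positivity)
  have hRnn : 0 ≤ R := Real.sqrt_nonneg _
  have hP9 : y ^ 2 + m ≤ 9 * Z := by nlinarith
  have habsQ : |Q| ≤ 9 * Z := by rcases abs_cases Q with ⟨h, _⟩ | ⟨h, _⟩ <;> nlinarith
  have hQR : Q ≤ R := by
    have h1 : Real.sqrt (Q ^ 2) ≤ R := Real.sqrt_le_sqrt (by nlinarith)
    rw [Real.sqrt_sq_eq_abs] at h1
    exact le_trans (le_abs_self Q) h1
  have hR10 : R ≤ 10 * Z := by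
    have h1 : R ≤ Real.sqrt ((10 * Z) ^ 2) :=
      Real.sqrt_le_sqrt (by nlinarith [sq_abs Q])
    rwa [Real.sqrt_sq (by positivity)] at h1
  have key1 : 4 * m ≤ (R + |Q|) * (R - Q) := by
    rcases abs_cases Q with ⟨h, h'⟩ | ⟨h, h'⟩
    · nlinarith
    · nlinarith [mul_nonneg hRnn (by linarith : (0:ℝ) ≤ -Q)]
  have s1 := KG_sq hm (y + 1)
  have s2 := KG_sq hm (y - 1)
  have s0 := KG_sq hm y
  have p1 := KG_pos hm (y + 1)
  have p2 := KG_pos hm (y - 1)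
  have p0 := KG_pos hm y
  have hprod : KG m (y + 1) * KG m (y - 1) = R := by
    rw [KG, KG, hRdef, ← Real.sqrt_mul (by positivity)]
    congr 1; rw [hQdef]; ring
  have hbound : ∀ a : ℝ, a ^ 2 + m ≤ 25 * Z → KG m a ≤ 5 * sZ := by
    intro a ha
    have h1 : KG m a ≤ Real.sqrt ((5 * sZ) ^ 2) := by
      rw [KG]; exact Real.sqrt_le_sqrt (by nlinarith [hsZsq])
    rwa [Real.sqrt_sq (by positivity)] at h1
  have hK1 : KG m (y + 1) ≤ 5 * sZ := hbound _ (by nlinarith)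
  have hK2 : KG m (y - 1) ≤ 5 * sZ := hbound _ (by nlinarith)
  have hK3 : KG m y ≤ 3 * sZ := by
    have h1 : KG m y ≤ Real.sqrt ((3 * sZ) ^ 2) := by
      rw [KG]; exact Real.sqrt_le_sqrt (by nlinarith [hsZsq])
    rwa [Real.sqrt_sq (by positivity)] at h1
  set u := KG m (y + 1) + KG m (y - 1) with hu
  set v := 2 * KG m y with hv
  have h_id : (u - v) * (u + v) = 2 * (R - Q) := by
    rw [hu, hv]; linear_combination s1 + s2 - 4 * s0 + 2 * hprod + 2 * hQdef
  have huvpos : 0 < u + v := by rw [hu, hv]; linarith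
  have huv0 : 0 ≤ u - v := by
    have h9 : (0:ℝ) * (u + v) ≤ (u - v) * (u + v) := by rw [h_id]; nlinarith
    exact le_of_mul_le_mul_right h9 huvpos
  have c2 : (u + v) * (R + |Q|) ≤ 304 * (Z * sZ) := by
    have h1 : u + v ≤ 16 * sZ := by rw [hu, hv]; linarith
    have h2 : R + |Q| ≤ 19 * Z := by linarith
    calc (u + v) * (R + |Q|) ≤ (16 * sZ) * (19 * Z) :=
          mul_le_mul h1 h2 (by positivity) (by positivity)
      _ = 304 * (Z * sZ) := by ring
  have c3 : 8 * m ≤ (u - v) * ((u + v) * (R + |Q|)) := by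
    have : (u - v) * ((u + v) * (R + |Q|)) = 2 * (R - Q) * (R + |Q|) := by
      rw [← mul_assoc, h_id]
    rw [this]; nlinarith [key1, hQR, abs_nonneg Q]
  have c4 : (u - v) * ((u + v) * (R + |Q|)) ≤ (u - v) * (304 * (Z * sZ)) :=
    mul_le_mul_of_nonneg_left c2 huv0
  rw [div_le_iff₀ (by positivity)]
  have c5 : 8 * m ≤ (u - v) * (304 * (Z * sZ)) := le_trans c3 c4
  have c6 : 0 ≤ (u - v) * (Z * sZ) := mul_nonneg huv0 (mul_nonneg hZpos.le (by linarith))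
  nlinarith [c5, c6]

end basic

lemma sorted22 {m : ℝ} (hm : 0 < m) {p q r s : ℤ} (hq : q ≤ s) (hs : s ≤ r) (hr : r ≤ p)
    (hsum : p + q = r + s) (hrp : r < p) {N : ℝ} (hN : 1 ≤ N)
    (hmin : ((min (min |p| |q|) (min |r| |s|) : ℤ) : ℝ) ≤ N) :
    m / (81 * ((N ^ 2 + m) * Real.sqrt (N ^ 2 + m)))
      ≤ KG m p + KG m q - KG m r - KG m s := by
  have hex : ∃ z : ℤ, q ≤ z ∧ z ≤ p ∧ |z| = min (min |p| |q|) (min |r| |s|) := by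
    rcases min_choice (min |p| |q|) (min |r| |s|) with h | h
    · rcases min_choice |p| |q| with h' | h'
      · exact ⟨p, by omega, le_refl _, by omega⟩
      · exact ⟨q, le_refl _, by omega, by omega⟩
    · rcases min_choice |r| |s| with h' | h'
      · exact ⟨r, by omega, by omega, by omega⟩
      · exact ⟨s, by omega, by omega, by omega⟩
  obtain ⟨z, hz1, hz2, hz3⟩ := hex
  set w : ℤ := min z (p - 2) with hwdef
  have hw1 : q ≤ w := by omega
  have hw2 : w + 2 ≤ p := by omega
  have hA : z - 2 ≤ w ∧ w ≤ z := by omega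
  have habs : |w + 1| ≤ |z| + 2 := by
    rcases abs_cases z with ⟨h1, h2⟩ | ⟨h1, h2⟩ <;>
      rcases abs_cases (w + 1) with ⟨h3, h4⟩ | ⟨h3, h4⟩ <;> omega
  have hzN : |(z : ℝ)| ≤ N := by rw [← Int.cast_abs, hz3]; exact hmin
  have hyabs : |(w : ℝ) + 1| ≤ 3 * N := by
    have h5 : ((|w + 1| : ℤ) : ℝ) ≤ ((|z| : ℤ) : ℝ) + 2 := by exact_mod_cast habs
    rw [Int.cast_abs, Int.cast_abs] at h5
    push_cast at h5
    linarith
  have hy : ((w : ℝ) + 1) ^ 2 ≤ 9 * N ^ 2 := by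
    nlinarith [abs_nonneg ((w : ℝ) + 1), sq_abs ((w : ℝ) + 1)]
  have h1 := secondDiff hm (y := (w : ℝ) + 1) hN hy
  have h2 := chain hm (p := (p : ℝ)) (q := (q : ℝ)) (r := (r : ℝ)) (s := (s : ℝ))
    (w := (w : ℝ)) (by exact_mod_cast hq) (by exact_mod_cast hs) (by exact_mod_cast hr)
    (by exact_mod_cast hsum)
    (by have h3 : ((r : ℝ)) + 1 ≤ p := by exact_mod_cast hrp
        linarith)
    (by exact_mod_cast hw1) (by exact_mod_cast hw2)
  have e1 : (w : ℝ) + 1 + 1 = (w : ℝ) + 2 := by ring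
  have e2 : (w : ℝ) + 1 - 1 = (w : ℝ) := by ring
  rw [e1, e2] at h1
  linarith

lemma core22 {m : ℝ} (hm : 0 < m) {a b c d : ℤ} (hsum : a + b = c + d)
    (h1 : a ≠ c) (h2 : a ≠ d) {N : ℝ} (hN : 1 ≤ N)
    (hmin : ((min (min |a| |b|) (min |c| |d|) : ℤ) : ℝ) ≤ N) :
    m / (81 * ((N ^ 2 + m) * Real.sqrt (N ^ 2 + m)))
      ≤ |KG m a + KG m b - KG m c - KG m d| := by
  have habs := le_abs_self (KG m a + KG m b - KG m c - KG m d)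
  have hneg := neg_le_abs (KG m a + KG m b - KG m c - KG m d)
  rcases le_total b a with hab | hab <;> rcases le_total d c with hcd | hcd
  · rcases le_total c a with h | h
    · have := sorted22 hm (p := a) (q := b) (r := c) (s := d)
        (by omega) hcd h hsum (by omega) hN hmin
      linarith
    · have := sorted22 hm (p := c) (q := d) (r := a) (s := b)
        (by omega) hab h (by omega) (by omega) hN
        (by rw [min_comm (|a| ⊓ |b|) (|c| ⊓ |d|)] at hmin; exact hmin)
      linarith
  · rcases le_total d a with h | h
    · have := sorted22 hm (p := a) (q := b) (r := d) (s := c)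
        (by omega) hcd h (by omega) (by omega) hN
        (by rw [min_comm (|c|) (|d|)] at hmin; exact hmin)
      linarith
    · have := sorted22 hm (p := d) (q := c) (r := a) (s := b)
        (by omega) hab h (by omega) (by omega) hN
        (by rw [min_comm (|a| ⊓ |b|) (|c| ⊓ |d|), min_comm (|c|) (|d|)] at hmin; exact hmin)
      linarith
  · rcases le_total c b with h | h
    · have := sorted22 hm (p := b) (q := a) (r := c) (s := d)
        (by omega) hcd h (by omega) (by omega) hN
        (by rw [min_comm (|a|) (|b|)] at hmin; exact hmin)
      linarith
    · have := sorted22 hm (p := c) (q := d) (r := b) (s := a)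
        (by omega) hab h (by omega) (by omega) hN
        (by rw [min_comm (|a| ⊓ |b|) (|c| ⊓ |d|), min_comm (|a|) (|b|)] at hmin; exact hmin)
      linarith
  · rcases le_total d b with h | h
    · have := sorted22 hm (p := b) (q := a) (r := d) (s := c)
        (by omega) hcd h (by omega) (by omega) hN
        (by rw [min_comm (|a|) (|b|), min_comm (|c|) (|d|)] at hmin; exact hmin)
      linarith
    · have := sorted22 hm (p := d) (q := c) (r := b) (s := a)
        (by omega) hab h (by omega) (by omega) hN
        (by rw [min_comm (|a| ⊓ |b|) (|c| ⊓ |d|), min_comm (|a|) (|b|), min_comm (|c|) (|d|)] at hmin;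
            exact hmin)
      linarith

section s31
variable {m : ℝ} (hm : 0 < m)
include hm

lemma KG_subadd (x y : ℝ) : KG m (x + y) ≤ KG m x + KG m y := by
  have h1 := KG_prod hm x y
  have s1 := KG_sq hm x; have s2 := KG_sq hm y
  have p1 := KG_pos hm x; have p2 := KG_pos hm y
  have : KG m (x + y) ≤ Real.sqrt ((KG m x + KG m y) ^ 2) := by
    rw [KG]; exact Real.sqrt_le_sqrt (by nlinarith)
  rwa [Real.sqrt_sq (by positivity)] at this

lemma KG_peel (A c : ℝ) : KG m (A + c) ≤ KG m A + |c| := by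
  have s1 := KG_sq hm A
  have p1 := KG_pos hm A
  have h2 := abs_le_KG hm A
  have : KG m (A + c) ≤ Real.sqrt ((KG m A + |c|) ^ 2) := by
    rw [KG]; apply Real.sqrt_le_sqrt
    nlinarith [abs_nonneg c, sq_abs c, abs_mul A c, le_abs_self (A * c), abs_nonneg A,
      mul_le_mul_of_nonneg_right h2 (abs_nonneg c)]
  rwa [Real.sqrt_sq (by positivity)] at this

lemma KG_L2a (x y : ℝ) : Real.sqrt ((x + y) ^ 2 + 4 * m) ≤ KG m x + KG m y := by
  have h1 := KG_prod hm x y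
  have s1 := KG_sq hm x; have s2 := KG_sq hm y
  have p1 := KG_pos hm x; have p2 := KG_pos hm y
  have : Real.sqrt ((x + y) ^ 2 + 4 * m) ≤ Real.sqrt ((KG m x + KG m y) ^ 2) :=
    Real.sqrt_le_sqrt (by nlinarith)
  rwa [Real.sqrt_sq (by positivity)] at this

lemma KG_L2b (X y : ℝ) :
    Real.sqrt ((X + y) ^ 2 + 4 * m) ≤ Real.sqrt (X ^ 2 + 4 * m) + KG m y := by
  set A := Real.sqrt (X ^ 2 + 4 * m) with hA
  have hAsq : A ^ 2 = X ^ 2 + 4 * m := Real.sq_sqrt (by positivity)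
  have hApos : 0 < A := Real.sqrt_pos.2 (by positivity)
  have s2 := KG_sq hm y; have p2 := KG_pos hm y
  have hprod : X * y + 2 * m ≤ A * KG m y := by
    have e : A * KG m y = Real.sqrt ((X ^ 2 + 4 * m) * (y ^ 2 + m)) := by
      rw [hA, KG, ← Real.sqrt_mul (by positivity)]
    calc X * y + 2 * m ≤ |X * y + 2 * m| := le_abs_self _
      _ = Real.sqrt ((X * y + 2 * m) ^ 2) := (Real.sqrt_sq_eq_abs _).symm
      _ ≤ Real.sqrt ((X ^ 2 + 4 * m) * (y ^ 2 + m)) :=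
          Real.sqrt_le_sqrt (by nlinarith [sq_nonneg (X - 2 * y), sq_nonneg (X * y)])
      _ = A * KG m y := e.symm
  have : Real.sqrt ((X + y) ^ 2 + 4 * m) ≤ Real.sqrt ((A + KG m y) ^ 2) :=
    Real.sqrt_le_sqrt (by nlinarith)
  rwa [Real.sqrt_sq (by positivity)] at this

lemma case31_c (a b c : ℝ) :
    m / (2 * KG m c) ≤ KG m a + KG m b + KG m c - KG m (a + b + c) := by
  have h1 := KG_subadd hm a b
  have h2 := KG_peel hm (a + b) c
  have pc := KG_pos hm c
  have sc := KG_sq hm c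
  have hc := abs_le_KG hm c
  have key : m / (2 * KG m c) ≤ KG m c - |c| := by
    rw [div_le_iff₀ (by positivity)]
    nlinarith [abs_nonneg c, sq_abs c]
  linarith

lemma case31_d (a b c : ℝ) :
    m / (2 * KG m (a + b + c)) ≤ KG m a + KG m b + KG m c - KG m (a + b + c) := by
  have h1 := KG_L2a hm a b
  have h2 := KG_L2b hm (a + b) c
  set D := a + b + c with hD
  have sD := KG_sq hm D
  have pD := KG_pos hm D
  set A := Real.sqrt (D ^ 2 + 4 * m) with hA
  have hAsq : A ^ 2 = D ^ 2 + 4 * m := Real.sq_sqrt (by positivity)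
  have hApos : 0 < A := Real.sqrt_pos.2 (by positivity)
  have hA2 : A ≤ 2 * KG m D := by
    have : A ≤ Real.sqrt ((2 * KG m D) ^ 2) := by
      rw [hA]; exact Real.sqrt_le_sqrt (by nlinarith)
    rwa [Real.sqrt_sq (by positivity)] at this
  have key : m / (2 * KG m D) ≤ A - KG m D := by
    rw [div_le_iff₀ (by positivity)]
    nlinarith
  linarith

lemma bound_trans {x N : ℝ} (hN : 1 ≤ N) (hx : |x| ≤ N) :
    m / (81 * ((N ^ 2 + m) * Real.sqrt (N ^ 2 + m))) ≤ m / (2 * KG m x) := by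
  have hZ : (1:ℝ) ≤ N ^ 2 + m := by nlinarith
  have hsZ : KG m x ≤ Real.sqrt (N ^ 2 + m) := by
    rw [KG]; exact Real.sqrt_le_sqrt (by nlinarith [sq_abs x, abs_nonneg x])
  have hsZ1 : (1:ℝ) ≤ Real.sqrt (N ^ 2 + m) := by
    nlinarith [Real.sq_sqrt (by positivity : (0:ℝ) ≤ N ^ 2 + m), Real.sqrt_nonneg (N ^ 2 + m)]
  have hp := KG_pos hm x
  apply div_le_div_of_nonneg_left hm.le (by positivity)
  nlinarith [Real.sqrt_nonneg (N ^ 2 + m)]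

lemma lemma31 (a b c : ℝ) {N : ℝ} (hN : 1 ≤ N)
    (hmin : min (min |a| |b|) (min |c| |a + b + c|) ≤ N) :
    m / (81 * ((N ^ 2 + m) * Real.sqrt (N ^ 2 + m)))
      ≤ KG m a + KG m b + KG m c - KG m (a + b + c) := by
  rcases min_choice (min |a| |b|) (min |c| |a + b + c|) with h | h <;> rw [h] at hmin
  · rcases min_choice |a| |b| with h' | h' <;> rw [h'] at hmin
    · have h3 := case31_c hm b c a
      rw [show b + c + a = a + b + c by ring] at h3
      have := bound_trans hm hN hmin
      linarith
    · have h3 := case31_c hm a c b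
      rw [show a + c + b = a + b + c by ring] at h3
      have := bound_trans hm hN hmin
      linarith
  · rcases min_choice |c| |a + b + c| with h' | h' <;> rw [h'] at hmin
    · have h3 := case31_c hm a b c
      have := bound_trans hm hN hmin
      linarith
    · have h3 := case31_d hm a b c
      have := bound_trans hm hN hmin
      linarith

lemma caseAll (x : ℝ) {N : ℝ} (hN : 1 ≤ N) :
    m / (81 * ((N ^ 2 + m) * Real.sqrt (N ^ 2 + m))) ≤ KG m x := by
  have h1 : Real.sqrt m ≤ KG m x := by
    rw [KG]; exact Real.sqrt_le_sqrt (by nlinarith [sq_nonneg x])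
  have hZ : (1:ℝ) ≤ N ^ 2 + m := by nlinarith
  have hsm : Real.sqrt m ^ 2 = m := Real.sq_sqrt hm.le
  have hsm0 : 0 < Real.sqrt m := Real.sqrt_pos.2 hm
  have hmono : Real.sqrt m ≤ Real.sqrt (N ^ 2 + m) := Real.sqrt_le_sqrt (by nlinarith)
  have hsZ1 : (1:ℝ) ≤ Real.sqrt (N ^ 2 + m) := by
    nlinarith [Real.sq_sqrt (by positivity : (0:ℝ) ≤ N ^ 2 + m), Real.sqrt_nonneg (N ^ 2 + m)]
  have h2 : m / (81 * ((N ^ 2 + m) * Real.sqrt (N ^ 2 + m))) ≤ Real.sqrt m := by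
    rw [div_le_iff₀ (by positivity)]
    nlinarith [mul_le_mul_of_nonneg_left hmono hsm0.le,
      mul_nonneg hsm0.le (Real.sqrt_nonneg (N ^ 2 + m)),
      mul_le_mul_of_nonneg_right
        (by nlinarith : (1:ℝ) ≤ 81 * (N ^ 2 + m))
        (mul_nonneg hsm0.le (Real.sqrt_nonneg (N ^ 2 + m)))]
  linarith

end s31

lemma rpow32 {x : ℝ} (hx : 0 < x) : x ^ (3 / 2 : ℝ) = x * Real.sqrt x := by
  rw [show (3 / 2 : ℝ) = 1 + 1 / 2 by norm_num, Real.rpow_add hx, Real.rpow_one,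
    ← Real.sqrt_eq_rpow]

lemma min4_le_abs {A B C D x : ℝ} (h : x = A ∨ x = B ∨ x = C ∨ x = D) :
    min (min |A| |B|) (min |C| |D|) ≤ |x| := by
  rcases h with rfl | rfl | rfl | rfl
  · exact le_trans (min_le_left _ _) (min_le_left _ _)
  · exact le_trans (min_le_left _ _) (min_le_right _ _)
  · exact le_trans (min_le_right _ _) (min_le_left _ _)
  · exact le_trans (min_le_right _ _) (min_le_right _ _)

lemma min4_le_nmin (j : Fin 4 → ℤ) (A B C D : ℝ)
    (h0 : ((j 0 : ℤ) : ℝ) = A ∨ ((j 0 : ℤ) : ℝ) = B ∨ ((j 0 : ℤ) : ℝ) = C ∨ ((j 0 : ℤ) : ℝ) = D)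
    (h1 : ((j 1 : ℤ) : ℝ) = A ∨ ((j 1 : ℤ) : ℝ) = B ∨ ((j 1 : ℤ) : ℝ) = C ∨ ((j 1 : ℤ) : ℝ) = D)
    (h2 : ((j 2 : ℤ) : ℝ) = A ∨ ((j 2 : ℤ) : ℝ) = B ∨ ((j 2 : ℤ) : ℝ) = C ∨ ((j 2 : ℤ) : ℝ) = D)
    (h3 : ((j 3 : ℤ) : ℝ) = A ∨ ((j 3 : ℤ) : ℝ) = B ∨ ((j 3 : ℤ) : ℝ) = C ∨ ((j 3 : ℤ) : ℝ) = D) :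
    min (min |A| |B|) (min |C| |D|) ≤ nmin j := by
  unfold nmin jnorm
  exact le_min
    (le_min (le_trans (min4_le_abs h0) (le_max_left _ _))
      (le_trans (min4_le_abs h1) (le_max_left _ _)))
    (le_min (le_trans (min4_le_abs h2) (le_max_left _ _))
      (le_trans (min4_le_abs h3) (le_max_left _ _)))

lemma one_le_nmin (j : Fin 4 → ℤ) : 1 ≤ nmin j := by
  unfold nmin jnorm
  exact le_min (le_min (le_max_right _ _) (le_max_right _ _))
    (le_min (le_max_right _ _) (le_max_right _ _))

end SmallDiv

open SmallDiv in
/-- Lower bound for the fourth order small divisors of the Klein–Gordon frequencies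
`λ_j = √(j² + m)`: there is an absolute constant `c★ > 0` such that for every mass
`m > 0` and every non-trivially-resonant choice of signs `σ_i = ±1` and indices
`j_i ∈ ℤ` with `σ₁j₁ + σ₂j₂ + σ₃j₃ + σ₄j₄ = 0`, one has
`|σ₁λ_{j₁} + σ₂λ_{j₂} + σ₃λ_{j₃} + σ₄λ_{j₄}| ≥ c★ m / (n₀² + m)^{3/2} > 0`. -/
theorem small_divisor_lower_bound :
    ∃ c : ℝ, 0 < c ∧
      ∀ (m : ℝ), 0 < m →
        ∀ (j : Fin 4 → ℤ) (σ : Fin 4 → ℤ),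
          (∀ i, σ i = 1 ∨ σ i = -1) →
          (∑ i, σ i * j i) = 0 →
          (¬ ∃ τ : Equiv.Perm (Fin 4),
              j (τ 0) = j (τ 1) ∧ j (τ 2) = j (τ 3) ∧
              σ (τ 0) = -σ (τ 1) ∧ σ (τ 2) = -σ (τ 3)) →
          0 < c * m / ((nmin j) ^ 2 + m) ^ (3 / 2 : ℝ) ∧
          c * m / ((nmin j) ^ 2 + m) ^ (3 / 2 : ℝ)
            ≤ |∑ i, (σ i : ℝ) * Real.sqrt ((j i : ℝ) ^ 2 + m)| := by
  refine ⟨1/81, by norm_num, ?_⟩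
  intro m hm j σ hσ hsum hres
  have hN1 : (1:ℝ) ≤ nmin j := one_le_nmin j
  have hZpos : (0:ℝ) < (nmin j) ^ 2 + m := by nlinarith
  have h8 : 0 < Real.sqrt ((nmin j) ^ 2 + m) := Real.sqrt_pos.2 hZpos
  have eL : (1/81 : ℝ) * m / ((nmin j) ^ 2 + m) ^ (3/2:ℝ)
      = m / (81 * (((nmin j) ^ 2 + m) * Real.sqrt ((nmin j) ^ 2 + m))) := by
    rw [rpow32 hZpos]
    rw [div_eq_div_iff (by positivity) (by positivity)]
    ring
  refine ⟨by rw [rpow32 hZpos]; exact div_pos (by linarith) (mul_pos hZpos h8), ?_⟩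
  rw [Fin.sum_univ_four] at hsum
  rw [eL, Fin.sum_univ_four]
  rcases hσ 0 with h0 | h0 <;> rcases hσ 1 with h1 | h1 <;>
    rcases hσ 2 with h2 | h2 <;> rcases hσ 3 with h3 | h3 <;>
    rw [h0, h1, h2, h3] at hsum ⊢
  -- 1: (1,1,1,1)
  · have H := caseAll hm ((j 0 : ℤ):ℝ) (one_le_nmin j)
    have p1 := KG_pos hm (((j 1 : ℤ):ℝ))
    have p2 := KG_pos hm (((j 2 : ℤ):ℝ))
    have p3 := KG_pos hm (((j 3 : ℤ):ℝ))
    refine le_trans ?_ (le_abs_self _)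
    simp only [KG] at H p1 p2 p3
    push_cast
    linarith
  -- 2: (1,1,1,-1)
  · have e : ((j 0 : ℤ):ℝ) + ((j 1 : ℤ):ℝ) + ((j 2 : ℤ):ℝ) = ((j 3 : ℤ):ℝ) := by
      exact_mod_cast (show j 0 + j 1 + j 2 = j 3 by omega)
    have H := lemma31 hm ((j 0 : ℤ):ℝ) ((j 1 : ℤ):ℝ) ((j 2 : ℤ):ℝ) (one_le_nmin j)
      (by rw [e]; exact min4_le_nmin j _ _ _ _ (by tauto) (by tauto) (by tauto) (by tauto))
    rw [e] at H
    refine le_trans H (le_trans (le_of_eq ?_) (le_abs_self _))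
    simp only [KG]; push_cast; ring
  -- 3: (1,1,-1,1)
  · have e : ((j 0 : ℤ):ℝ) + ((j 1 : ℤ):ℝ) + ((j 3 : ℤ):ℝ) = ((j 2 : ℤ):ℝ) := by
      exact_mod_cast (show j 0 + j 1 + j 3 = j 2 by omega)
    have H := lemma31 hm ((j 0 : ℤ):ℝ) ((j 1 : ℤ):ℝ) ((j 3 : ℤ):ℝ) (one_le_nmin j)
      (by rw [e]; exact min4_le_nmin j _ _ _ _ (by tauto) (by tauto) (by tauto) (by tauto))
    rw [e] at H
    refine le_trans H (le_trans (le_of_eq ?_) (le_abs_self _))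
    simp only [KG]; push_cast; ring
  -- 4: (1,1,-1,-1)
  · have hne1 : j 0 ≠ j 2 := by
      intro he
      exact hres ⟨⟨![0,2,1,3], ![0,2,1,3], by decide, by decide⟩, he,
        by show j 1 = j 3; omega,
        by show σ 0 = -σ 2; rw [h0, h2]; norm_num,
        by show σ 1 = -σ 3; rw [h1, h3]; norm_num⟩
    have hne2 : j 0 ≠ j 3 := by
      intro he
      exact hres ⟨⟨![0,3,1,2], ![0,2,3,1], by decide, by decide⟩, he,
        by show j 1 = j 2; omega,
        by show σ 0 = -σ 3; rw [h0, h3]; norm_num,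
        by show σ 1 = -σ 2; rw [h1, h2]; norm_num⟩
    have H := core22 hm (a := j 0) (b := j 1) (c := j 2) (d := j 3) (by omega) hne1 hne2
      (one_le_nmin j)
      (by push_cast
          exact min4_le_nmin j _ _ _ _ (by tauto) (by tauto) (by tauto) (by tauto))
    convert H using 2
    simp only [KG]; push_cast; ring
  -- 5: (1,-1,1,1)
  · have e : ((j 0 : ℤ):ℝ) + ((j 2 : ℤ):ℝ) + ((j 3 : ℤ):ℝ) = ((j 1 : ℤ):ℝ) := by
      exact_mod_cast (show j 0 + j 2 + j 3 = j 1 by omega)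
    have H := lemma31 hm ((j 0 : ℤ):ℝ) ((j 2 : ℤ):ℝ) ((j 3 : ℤ):ℝ) (one_le_nmin j)
      (by rw [e]; exact min4_le_nmin j _ _ _ _ (by tauto) (by tauto) (by tauto) (by tauto))
    rw [e] at H
    refine le_trans H (le_trans (le_of_eq ?_) (le_abs_self _))
    simp only [KG]; push_cast; ring
  -- 6: (1,-1,1,-1)  plus {0,2}
  · have hne1 : j 0 ≠ j 1 := by
      intro he
      exact hres ⟨⟨![0,1,2,3], ![0,1,2,3], by decide, by decide⟩, he,
        by show j 2 = j 3; omega,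
        by show σ 0 = -σ 1; rw [h0, h1]; norm_num,
        by show σ 2 = -σ 3; rw [h2, h3]; norm_num⟩
    have hne2 : j 0 ≠ j 3 := by
      intro he
      exact hres ⟨⟨![0,3,2,1], ![0,3,2,1], by decide, by decide⟩, he,
        by show j 2 = j 1; omega,
        by show σ 0 = -σ 3; rw [h0, h3]; norm_num,
        by show σ 2 = -σ 1; rw [h2, h1]; norm_num⟩
    have H := core22 hm (a := j 0) (b := j 2) (c := j 1) (d := j 3) (by omega) hne1 hne2
      (one_le_nmin j)
      (by push_cast
          exact min4_le_nmin j _ _ _ _ (by tauto) (by tauto) (by tauto) (by tauto))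
    convert H using 2
    simp only [KG]; push_cast; ring
  -- 7: (1,-1,-1,1)  plus {0,3}
  · have hne1 : j 0 ≠ j 1 := by
      intro he
      exact hres ⟨⟨![0,1,3,2], ![0,1,3,2], by decide, by decide⟩, he,
        by show j 3 = j 2; omega,
        by show σ 0 = -σ 1; rw [h0, h1]; norm_num,
        by show σ 3 = -σ 2; rw [h3, h2]; norm_num⟩
    have hne2 : j 0 ≠ j 2 := by
      intro he
      exact hres ⟨⟨![0,2,3,1], ![0,3,1,2], by decide, by decide⟩, he,
        by show j 3 = j 1; omega,
        by show σ 0 = -σ 2; rw [h0, h2]; norm_num,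
        by show σ 3 = -σ 1; rw [h3, h1]; norm_num⟩
    have H := core22 hm (a := j 0) (b := j 3) (c := j 1) (d := j 2) (by omega) hne1 hne2
      (one_le_nmin j)
      (by push_cast
          exact min4_le_nmin j _ _ _ _ (by tauto) (by tauto) (by tauto) (by tauto))
    convert H using 2
    simp only [KG]; push_cast; ring
  -- 8: (1,-1,-1,-1)  plus at 0
  · have e : ((j 1 : ℤ):ℝ) + ((j 2 : ℤ):ℝ) + ((j 3 : ℤ):ℝ) = ((j 0 : ℤ):ℝ) := by
      exact_mod_cast (show j 1 + j 2 + j 3 = j 0 by omega)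
    have H := lemma31 hm ((j 1 : ℤ):ℝ) ((j 2 : ℤ):ℝ) ((j 3 : ℤ):ℝ) (one_le_nmin j)
      (by rw [e]; exact min4_le_nmin j _ _ _ _ (by tauto) (by tauto) (by tauto) (by tauto))
    rw [e] at H
    refine le_trans H (le_trans (le_of_eq ?_) (neg_le_abs _))
    simp only [KG]; push_cast; ring
  -- 9: (-1,1,1,1)
  · have e : ((j 1 : ℤ):ℝ) + ((j 2 : ℤ):ℝ) + ((j 3 : ℤ):ℝ) = ((j 0 : ℤ):ℝ) := by
      exact_mod_cast (show j 1 + j 2 + j 3 = j 0 by omega)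
    have H := lemma31 hm ((j 1 : ℤ):ℝ) ((j 2 : ℤ):ℝ) ((j 3 : ℤ):ℝ) (one_le_nmin j)
      (by rw [e]; exact min4_le_nmin j _ _ _ _ (by tauto) (by tauto) (by tauto) (by tauto))
    rw [e] at H
    refine le_trans H (le_trans (le_of_eq ?_) (le_abs_self _))
    simp only [KG]; push_cast; ring
  -- 10: (-1,1,1,-1)  plus {1,2}
  · have hne1 : j 1 ≠ j 0 := by
      intro he
      exact hres ⟨⟨![1,0,2,3], ![1,0,2,3], by decide, by decide⟩, he,
        by show j 2 = j 3; omega,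
        by show σ 1 = -σ 0; rw [h1, h0]; norm_num,
        by show σ 2 = -σ 3; rw [h2, h3]; norm_num⟩
    have hne2 : j 1 ≠ j 3 := by
      intro he
      exact hres ⟨⟨![1,3,2,0], ![3,0,2,1], by decide, by decide⟩, he,
        by show j 2 = j 0; omega,
        by show σ 1 = -σ 3; rw [h1, h3]; norm_num,
        by show σ 2 = -σ 0; rw [h2, h0]; norm_num⟩
    have H := core22 hm (a := j 1) (b := j 2) (c := j 0) (d := j 3) (by omega) hne1 hne2
      (one_le_nmin j)
      (by push_cast
          exact min4_le_nmin j _ _ _ _ (by tauto) (by tauto) (by tauto) (by tauto))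
    convert H using 2
    simp only [KG]; push_cast; ring
  -- 11: (-1,1,-1,1)  plus {1,3}
  · have hne1 : j 1 ≠ j 0 := by
      intro he
      exact hres ⟨⟨![1,0,3,2], ![1,0,3,2], by decide, by decide⟩, he,
        by show j 3 = j 2; omega,
        by show σ 1 = -σ 0; rw [h1, h0]; norm_num,
        by show σ 3 = -σ 2; rw [h3, h2]; norm_num⟩
    have hne2 : j 1 ≠ j 2 := by
      intro he
      exact hres ⟨⟨![1,2,3,0], ![3,0,1,2], by decide, by decide⟩, he,
        by show j 3 = j 0; omega,
        by show σ 1 = -σ 2; rw [h1, h2]; norm_num,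
        by show σ 3 = -σ 0; rw [h3, h0]; norm_num⟩
    have H := core22 hm (a := j 1) (b := j 3) (c := j 0) (d := j 2) (by omega) hne1 hne2
      (one_le_nmin j)
      (by push_cast
          exact min4_le_nmin j _ _ _ _ (by tauto) (by tauto) (by tauto) (by tauto))
    convert H using 2
    simp only [KG]; push_cast; ring
  -- 12: (-1,1,-1,-1)  plus at 1
  · have e : ((j 0 : ℤ):ℝ) + ((j 2 : ℤ):ℝ) + ((j 3 : ℤ):ℝ) = ((j 1 : ℤ):ℝ) := by
      exact_mod_cast (show j 0 + j 2 + j 3 = j 1 by omega)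
    have H := lemma31 hm ((j 0 : ℤ):ℝ) ((j 2 : ℤ):ℝ) ((j 3 : ℤ):ℝ) (one_le_nmin j)
      (by rw [e]; exact min4_le_nmin j _ _ _ _ (by tauto) (by tauto) (by tauto) (by tauto))
    rw [e] at H
    refine le_trans H (le_trans (le_of_eq ?_) (neg_le_abs _))
    simp only [KG]; push_cast; ring
  -- 13: (-1,-1,1,1)  plus {2,3}
  · have hne1 : j 2 ≠ j 0 := by
      intro he
      exact hres ⟨⟨![2,0,3,1], ![1,3,0,2], by decide, by decide⟩, he,
        by show j 3 = j 1; omega,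
        by show σ 2 = -σ 0; rw [h2, h0]; norm_num,
        by show σ 3 = -σ 1; rw [h3, h1]; norm_num⟩
    have hne2 : j 2 ≠ j 1 := by
      intro he
      exact hres ⟨⟨![2,1,3,0], ![3,1,0,2], by decide, by decide⟩, he,
        by show j 3 = j 0; omega,
        by show σ 2 = -σ 1; rw [h2, h1]; norm_num,
        by show σ 3 = -σ 0; rw [h3, h0]; norm_num⟩
    have H := core22 hm (a := j 2) (b := j 3) (c := j 0) (d := j 1) (by omega) hne1 hne2
      (one_le_nmin j)
      (by push_cast
          exact min4_le_nmin j _ _ _ _ (by tauto) (by tauto) (by tauto) (by tauto))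
    convert H using 2
    simp only [KG]; push_cast; ring
  -- 14: (-1,-1,1,-1)  plus at 2
  · have e : ((j 0 : ℤ):ℝ) + ((j 1 : ℤ):ℝ) + ((j 3 : ℤ):ℝ) = ((j 2 : ℤ):ℝ) := by
      exact_mod_cast (show j 0 + j 1 + j 3 = j 2 by omega)
    have H := lemma31 hm ((j 0 : ℤ):ℝ) ((j 1 : ℤ):ℝ) ((j 3 : ℤ):ℝ) (one_le_nmin j)
      (by rw [e]; exact min4_le_nmin j _ _ _ _ (by tauto) (by tauto) (by tauto) (by tauto))
    rw [e] at H
    refine le_trans H (le_trans (le_of_eq ?_) (neg_le_abs _))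
    simp only [KG]; push_cast; ring
  -- 15: (-1,-1,-1,1)  plus at 3
  · have e : ((j 0 : ℤ):ℝ) + ((j 1 : ℤ):ℝ) + ((j 2 : ℤ):ℝ) = ((j 3 : ℤ):ℝ) := by
      exact_mod_cast (show j 0 + j 1 + j 2 = j 3 by omega)
    have H := lemma31 hm ((j 0 : ℤ):ℝ) ((j 1 : ℤ):ℝ) ((j 2 : ℤ):ℝ) (one_le_nmin j)
      (by rw [e]; exact min4_le_nmin j _ _ _ _ (by tauto) (by tauto) (by tauto) (by tauto))
    rw [e] at H
    refine le_trans H (le_trans (le_of_eq ?_) (neg_le_abs _))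
    simp only [KG]; push_cast; ring
  -- 16: (-1,-1,-1,-1)
  · have H := caseAll hm ((j 0 : ℤ):ℝ) (one_le_nmin j)
    have p1 := KG_pos hm (((j 1 : ℤ):ℝ))
    have p2 := KG_pos hm (((j 2 : ℤ):ℝ))
    have p3 := KG_pos hm (((j 3 : ℤ):ℝ))
    refine le_trans ?_ (neg_le_abs _)
    simp only [KG] at H p1 p2 p3
    push_cast
    linarith
end

section
/- For all real constants 𝙺 ≥ 1, C* ≥ 1 and K* > 0 there exist ε★ ∈ (0, 1), C⋆ > e^{K*} and χ ∈ (1, 2), depending only on 𝙺, C*, K* (and not on ν), with the following property. Let ν ∈ ℕ and let ε_i^{(−1)}, ε_i^{(0)} ≥ 0 (i = 0, …, ν) satisfy, for all i = 0, …, ν − 1: ε_{i+1}^{(−1)} ≤ C* 𝙺^i (ε̄_i)² + C* ε_i^{(−1)} e^{−K* 2^i} and ε_{i+1}^{(0)} ≤ C* 𝙺^i ( ε_i^{(−1)} + (ε̄_i)² ) + C* ε_i^{(0)} e^{−K* 2^i}, where ε̄_i := ε_i^{(−1)} + ε_i^{(0)}. If ε̄_0 ≤ ε★, then ε̄_i ≤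 C⋆ ε̄_0 e^{−K* χ^i} for all i = 0, …, ν. -/
lemma exp_quad' (x : ℝ) (hx : 0 ≤ x) : 1 + x^2/4 ≤ Real.exp x := by
  have h := Real.add_one_le_exp (x/2)
  have h2 : Real.exp (x/2) * Real.exp (x/2) = Real.exp x := by
    rw [← Real.exp_add]; ring_nf
  nlinarith [h, h2, hx]

lemma keyE (M β : ℝ) (hM : 1 ≤ M) (hβ : 0 < β) (i : ℕ) :
    M ^ i * Real.exp (-(β * (4/3:ℝ) ^ i)) ≤
      Real.exp ((Real.log M)^2 / (β * (Real.log (4/3:ℝ))^2)) := by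
  set L := Real.log M with hL_def
  set c := Real.log (4/3:ℝ) with hc_def
  have hL : 0 ≤ L := Real.log_nonneg hM
  have hc : 0 < c := Real.log_pos (by norm_num)
  have hMpow : M ^ i = Real.exp ((i:ℝ) * L) := by
    rw [Real.exp_nat_mul, Real.exp_log (by linarith : (0:ℝ) < M)]
  have hpow : (4/3:ℝ)^i = Real.exp ((i:ℝ) * c) := by
    rw [Real.exp_nat_mul, Real.exp_log (by norm_num)]
  have h1 : 1 + ((i:ℝ)*c)^2/4 ≤ (4/3:ℝ)^i := by
    rw [hpow]; exact exp_quad' _ (by positivity)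
  have hbc : 0 < β * c^2 := by positivity
  have key : (i:ℝ)*L - β*c^2/4*(i:ℝ)^2 ≤ L^2/(β*c^2) := by
    rw [le_div_iff₀ hbc]
    nlinarith [sq_nonneg (β*c^2*(i:ℝ) - 2*L)]
  have hexps : (i:ℝ)*L - β*(4/3:ℝ)^i ≤ L^2/(β*c^2) := by
    nlinarith [h1, key, hβ, sq_nonneg ((i:ℝ)*c)]
  calc M ^ i * Real.exp (-(β * (4/3:ℝ) ^ i))
      = Real.exp ((i:ℝ)*L - β*(4/3:ℝ)^i) := by rw [hMpow, ← Real.exp_add]; ring_nf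
    _ ≤ _ := Real.exp_le_exp.mpr hexps

lemma keyF (Rr K : ℝ) (hR : 1 ≤ Rr) (hK : 0 < K) (i : ℕ) :
    Rr ^ i * Real.exp (-(K * (4/3:ℝ) ^ i)) ≤
      Real.exp ((Real.log Rr)^2 / (K * (Real.log (16/15:ℝ))^2)) *
        Real.exp (-(K * (5/4:ℝ)^i)) := by
  set L := Real.log Rr with hL_def
  set c := Real.log (16/15:ℝ) with hc_def
  have hL : 0 ≤ L := Real.log_nonneg hR
  have hc : 0 < c := Real.log_pos (by norm_num)
  have hRpow : Rr ^ i = Real.exp ((i:ℝ) * L) := by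
    rw [Real.exp_nat_mul, Real.exp_log (by linarith : (0:ℝ) < Rr)]
  have hpow : (16/15:ℝ)^i = Real.exp ((i:ℝ) * c) := by
    rw [Real.exp_nat_mul, Real.exp_log (by norm_num)]
  have h1 : 1 + ((i:ℝ)*c)^2/4 ≤ (16/15:ℝ)^i := by
    rw [hpow]; exact exp_quad' _ (by positivity)
  have hsplit : (4/3:ℝ)^i = (5/4:ℝ)^i * (16/15:ℝ)^i := by
    rw [← mul_pow]; norm_num
  have h54 : (1:ℝ) ≤ (5/4:ℝ)^i := one_le_pow₀ (by norm_num)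
  have hdiff : ((i:ℝ)*c)^2/4 ≤ (4/3:ℝ)^i - (5/4:ℝ)^i := by
    rw [hsplit]
    nlinarith [h1, h54]
  have hbc : 0 < K * c^2 := by positivity
  have key : (i:ℝ)*L - K*c^2/4*(i:ℝ)^2 ≤ L^2/(K*c^2) := by
    rw [le_div_iff₀ hbc]
    nlinarith [sq_nonneg (K*c^2*(i:ℝ) - 2*L)]
  have hexps : (i:ℝ)*L - K*(4/3:ℝ)^i ≤ L^2/(K*c^2) - K*(5/4:ℝ)^i := by
    nlinarith [hdiff, key, hK, sq_nonneg ((i:ℝ)*c)]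
  calc Rr ^ i * Real.exp (-(K * (4/3:ℝ) ^ i))
      = Real.exp ((i:ℝ)*L - K*(4/3:ℝ)^i) := by rw [hRpow, ← Real.exp_add]; ring_nf
    _ ≤ Real.exp (L^2/(K*c^2) - K*(5/4:ℝ)^i) := Real.exp_le_exp.mpr hexps
    _ = _ := by rw [← Real.exp_add]; ring_nf

set_option maxHeartbeats 2000000 in
/-- Convergence lemma for the KAM iteration: if the sizes `ε_i^{(-1)}, ε_i^{(0)}` of the
degree `-1` and degree `0` parts of the perturbation satisfy the quadratic-plus-tail
iterative inequalities, then `ε̄_i = ε_i^{(-1)} + ε_i^{(0)}` decays super-exponentially: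
`ε̄_i ≤ C⋆ ε̄₀ e^{-K* χ^i}` for some `χ ∈ (1, 2)`, provided `ε̄₀` is small enough. -/
theorem kam_iteration_convergence
    (Kc Cstar Kstar : ℝ) (hKc : 1 ≤ Kc) (hC : 1 ≤ Cstar) (hK : 0 < Kstar) :
    ∃ εstar Cs χ : ℝ,
      εstar ∈ Set.Ioo (0 : ℝ) 1 ∧ Real.exp Kstar < Cs ∧ χ ∈ Set.Ioo (1 : ℝ) 2 ∧
      ∀ (ν : ℕ) (ε1 ε0 : ℕ → ℝ),
        (∀ i ≤ ν, 0 ≤ ε1 i ∧ 0 ≤ ε0 i) →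
        (∀ i < ν,
          ε1 (i + 1) ≤ Cstar * Kc ^ i * (ε1 i + ε0 i) ^ 2
              + Cstar * ε1 i * Real.exp (-Kstar * 2 ^ i) ∧
          ε0 (i + 1) ≤ Cstar * Kc ^ i * (ε1 i + (ε1 i + ε0 i) ^ 2)
              + Cstar * ε0 i * Real.exp (-Kstar * 2 ^ i)) →
        ε1 0 + ε0 0 ≤ εstar →
        ∀ i ≤ ν, ε1 i + ε0 i ≤ Cs * (ε1 0 + ε0 0) * Real.exp (-Kstar * χ ^ i) := by
  have hC0 : (0:ℝ) < Cstar := lt_of_lt_of_le one_pos hC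
  have hKc0 : (0:ℝ) < Kc := lt_of_lt_of_le one_pos hKc
  have hlog43 : (0:ℝ) < Real.log (4/3:ℝ) := Real.log_pos (by norm_num)
  have hlog1615 : (0:ℝ) < Real.log (16/15:ℝ) := Real.log_pos (by norm_num)
  obtain ⟨E1, hE1_def⟩ : ∃ x:ℝ, x = Real.exp ((Real.log Kc)^2 / ((1/15*Kstar) * (Real.log (4/3:ℝ))^2)) := ⟨_, rfl⟩
  have hE1 : (1:ℝ) ≤ E1 := by
    rw [hE1_def]
    apply Real.one_le_exp
    apply div_nonneg (sq_nonneg _)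
    have h15 : (0:ℝ) < 1/15*Kstar := by linarith
    positivity
  obtain ⟨R, hR_def⟩ : ∃ x:ℝ, x = 3*Cstar*Real.exp (2/5*Kstar)*E1 + 2 := ⟨_, rfl⟩
  have hexp25 : (1:ℝ) ≤ Real.exp (2/5*Kstar) := Real.one_le_exp (by linarith)
  have hprod1 : (1:ℝ) ≤ Real.exp (2/5*Kstar)*E1 := by
    have := mul_le_mul hexp25 hE1 zero_le_one (by linarith)
    linarith
  have hR3CE : 3*Cstar*Real.exp (2/5*Kstar)*E1 ≤ R := by rw [hR_def]; linarith
  have hR3C : 3*Cstar ≤ R := by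
    have : 3*Cstar*1 ≤ 3*Cstar*(Real.exp (2/5*Kstar)*E1) := by
      apply mul_le_mul_of_nonneg_left hprod1 (by linarith)
    rw [hR_def]; linarith
  have hR1 : (1:ℝ) ≤ R := by linarith
  have hRpos : (0:ℝ) < R := lt_of_lt_of_le one_pos hR1
  have hKcR : (1:ℝ) ≤ Kc*R := by
    have := mul_le_mul hKc hR1 zero_le_one (by linarith)
    linarith
  obtain ⟨E2a, hE2a_def⟩ : ∃ x:ℝ, x = Real.exp ((Real.log (Kc*R))^2 / ((2/15*Kstar) * (Real.log (4/3:ℝ))^2)) := ⟨_, rfl⟩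
  obtain ⟨E2d, hE2d_def⟩ : ∃ x:ℝ, x = Real.exp ((Real.log (Kc*R))^2 / ((2/3*Kstar) * (Real.log (4/3:ℝ))^2)) := ⟨_, rfl⟩
  have hE2a : (0:ℝ) < E2a := hE2a_def ▸ Real.exp_pos _
  have hE2d : (0:ℝ) < E2d := hE2d_def ▸ Real.exp_pos _
  have hXa : (0:ℝ) < 2*Cstar*Real.exp (3/5*Kstar)*E2a :=
    mul_pos (mul_pos (mul_pos two_pos hC0) (Real.exp_pos _)) hE2a
  have hXd : (0:ℝ) < 6*Cstar*Real.exp Kstar*E2d :=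
    mul_pos (mul_pos (mul_pos (by norm_num) hC0) (Real.exp_pos _)) hE2d
  obtain ⟨εs, hεs_def⟩ : ∃ x:ℝ, x = min (1/2) (min (2*Cstar*Real.exp (3/5*Kstar)*E2a)⁻¹ (6*Cstar*Real.exp Kstar*E2d)⁻¹) := ⟨_, rfl⟩
  obtain ⟨F, hF_def⟩ : ∃ x:ℝ, x = Real.exp ((Real.log R)^2 / (Kstar * (Real.log (16/15:ℝ))^2)) := ⟨_, rfl⟩
  have hF1 : (1:ℝ) ≤ F := by
    rw [hF_def]
    apply Real.one_le_exp
    apply div_nonneg (sq_nonneg _)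
    positivity
  obtain ⟨Cs, hCs_def⟩ : ∃ x:ℝ, x = Real.exp Kstar * F + 1 := ⟨_, rfl⟩
  refine ⟨εs, Cs, 5/4, ⟨?_, ?_⟩, ?_, ⟨by norm_num, by norm_num⟩, ?_⟩
  · rw [hεs_def]
    exact lt_min (by norm_num) (lt_min (inv_pos.mpr hXa) (inv_pos.mpr hXd))
  · rw [hεs_def]
    exact lt_of_le_of_lt (min_le_left _ _) (by norm_num)
  · have h1 := Real.exp_pos Kstar
    rw [hCs_def]
    have h2 := mul_le_mul_of_nonneg_left hF1 (le_of_lt h1)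
    rw [mul_one] at h2
    linarith
  intro ν ε1 ε0 hnn hrec h0
  set δ := ε1 0 + ε0 0 with hδ_def
  have hδ0 : (0:ℝ) ≤ δ := by
    have h := hnn 0 (Nat.zero_le _); linarith [h.1, h.2]
  have hδεs : δ ≤ εs := h0
  have hεsA : Cstar*Real.exp (3/5*Kstar)*E2a*εs ≤ 1/2 := by
    have h : εs ≤ (2*Cstar*Real.exp (3/5*Kstar)*E2a)⁻¹ := by
      rw [hεs_def]; exact le_trans (min_le_right _ _) (min_le_left _ _)
    have h2 : Cstar*Real.exp (3/5*Kstar)*E2a*εs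
        ≤ Cstar*Real.exp (3/5*Kstar)*E2a*(2*Cstar*Real.exp (3/5*Kstar)*E2a)⁻¹ := by
      apply mul_le_mul_of_nonneg_left h
      positivity
    have h3 : Cstar*Real.exp (3/5*Kstar)*E2a*(2*Cstar*Real.exp (3/5*Kstar)*E2a)⁻¹ = 1/2 := by
      field_simp
    linarith
  have hεsD : Cstar*Real.exp Kstar*E2d*εs ≤ 1/6 := by
    have h : εs ≤ (6*Cstar*Real.exp Kstar*E2d)⁻¹ := by
      rw [hεs_def]; exact le_trans (min_le_right _ _) (min_le_right _ _)
    have h2 : Cstar*Real.exp Kstar*E2d*εs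
        ≤ Cstar*Real.exp Kstar*E2d*(6*Cstar*Real.exp Kstar*E2d)⁻¹ := by
      apply mul_le_mul_of_nonneg_left h
      positivity
    have h3 : Cstar*Real.exp Kstar*E2d*(6*Cstar*Real.exp Kstar*E2d)⁻¹ = 1/6 := by
      field_simp
    linarith
  have main : ∀ i, i ≤ ν →
      ε1 i ≤ δ * R^i * Real.exp (7/5*Kstar - 7/5*(Kstar*(4/3:ℝ)^i)) ∧
      ε1 i + ε0 i ≤ δ * R^i * Real.exp (Kstar - Kstar*(4/3:ℝ)^i) := by
    intro i
    induction i with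
    | zero =>
      intro _
      have h := hnn 0 (Nat.zero_le _)
      have he1 : (7/5*Kstar - 7/5*(Kstar*(4/3:ℝ)^0)) = 0 := by norm_num
      have he2 : (Kstar - Kstar*(4/3:ℝ)^0) = 0 := by norm_num
      rw [he1, he2, pow_zero, Real.exp_zero, mul_one, mul_one]
      exact ⟨by linarith [h.2], le_refl _⟩
    | succ i ih =>
      intro hsucc
      have hi : i < ν := Nat.lt_of_succ_le hsucc
      obtain ⟨hP, hQ⟩ := ih (Nat.le_of_lt hi)
      obtain ⟨hr1, hr0⟩ := hrec i hi
      obtain ⟨h1nn, h0nn⟩ := hnn i (Nat.le_of_lt hi)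
      have hbnn : (0:ℝ) ≤ ε1 i + ε0 i := by linarith
      have hRip : (0:ℝ) ≤ R^i := by positivity
      have hKcip : (0:ℝ) ≤ Kc^i := by positivity
      have hpowsucc : (4/3:ℝ)^(i+1) = 4/3*(4/3:ℝ)^i := by rw [pow_succ]; ring
      have h2i : (4/3:ℝ)^i ≤ (2:ℝ)^i := by
        apply pow_le_pow_left₀ (by norm_num) (by norm_num)
      have h43p : (0:ℝ) < (4/3:ℝ)^i := by positivity
      have hsq : (ε1 i + ε0 i)^2 ≤ (δ * R^i * Real.exp (Kstar - Kstar*(4/3:ℝ)^i))^2 :=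
        pow_le_pow_left₀ hbnn hQ 2
      -- core quadratic bound for P
      have hkeyA : (Kc*R)^i * Real.exp (-(2/15*Kstar * (4/3:ℝ)^i)) ≤ E2a := by
        rw [hE2a_def]; exact keyE (Kc*R) (2/15*Kstar) hKcR (by linarith) i
      have core_a : Cstar*Kc^i*(δ * R^i * Real.exp (Kstar - Kstar*(4/3:ℝ)^i))^2
          ≤ 1/2 * (δ * R^(i+1) * Real.exp (7/5*Kstar - 7/5*(Kstar*(4/3:ℝ)^(i+1)))) := by
        have hexpA : Real.exp (Kstar - Kstar*(4/3:ℝ)^i) ^ 2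
            = Real.exp (3/5*Kstar) * Real.exp (-(2/15*Kstar*(4/3:ℝ)^i))
              * Real.exp (7/5*Kstar - 7/5*(Kstar*(4/3:ℝ)^(i+1))) := by
          rw [sq, ← Real.exp_add, ← Real.exp_add, ← Real.exp_add, hpowsucc]
          congr 1; ring
        have heq : Cstar*Kc^i*(δ * R^i * Real.exp (Kstar - Kstar*(4/3:ℝ)^i))^2
            = (Cstar * Real.exp (3/5*Kstar)
                * ((Kc*R)^i * Real.exp (-(2/15*Kstar*(4/3:ℝ)^i))) * δ)
              * (δ * R^i * Real.exp (7/5*Kstar - 7/5*(Kstar*(4/3:ℝ)^(i+1)))) := by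
          rw [mul_pow, mul_pow, hexpA, mul_pow]
          ring
        have hf1 : Cstar * Real.exp (3/5*Kstar)
            * ((Kc*R)^i * Real.exp (-(2/15*Kstar*(4/3:ℝ)^i))) * δ ≤ 1/2 := by
          have hs1 : Cstar * Real.exp (3/5*Kstar)
              * ((Kc*R)^i * Real.exp (-(2/15*Kstar*(4/3:ℝ)^i))) * δ
              ≤ Cstar * Real.exp (3/5*Kstar) * E2a * δ := by
            apply mul_le_mul_of_nonneg_right _ hδ0
            apply mul_le_mul_of_nonneg_left hkeyA
            positivity
          have hs2 : Cstar * Real.exp (3/5*Kstar) * E2a * δ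
              ≤ Cstar*Real.exp (3/5*Kstar)*E2a*εs := by
            apply mul_le_mul_of_nonneg_left hδεs
            positivity
          linarith
        have hf2nn : (0:ℝ) ≤ δ * R^i * Real.exp (7/5*Kstar - 7/5*(Kstar*(4/3:ℝ)^(i+1))) := by
          apply mul_nonneg (mul_nonneg hδ0 hRip) (Real.exp_nonneg _)
        have hf2le : δ * R^i * Real.exp (7/5*Kstar - 7/5*(Kstar*(4/3:ℝ)^(i+1)))
            ≤ δ * R^(i+1) * Real.exp (7/5*Kstar - 7/5*(Kstar*(4/3:ℝ)^(i+1))) := by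
          apply mul_le_mul_of_nonneg_right _ (Real.exp_nonneg _)
          apply mul_le_mul_of_nonneg_left (pow_le_pow_right₀ hR1 (Nat.le_succ i)) hδ0
        calc Cstar*Kc^i*(δ * R^i * Real.exp (Kstar - Kstar*(4/3:ℝ)^i))^2
            = _ := heq
          _ ≤ 1/2 * (δ * R^i * Real.exp (7/5*Kstar - 7/5*(Kstar*(4/3:ℝ)^(i+1)))) :=
              mul_le_mul_of_nonneg_right hf1 hf2nn
          _ ≤ 1/2 * (δ * R^(i+1) * Real.exp (7/5*Kstar - 7/5*(Kstar*(4/3:ℝ)^(i+1)))) := by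
              linarith
      -- core quadratic bound for Q
      have hkeyD : (Kc*R)^i * Real.exp (-(2/3*Kstar * (4/3:ℝ)^i)) ≤ E2d := by
        rw [hE2d_def]; exact keyE (Kc*R) (2/3*Kstar) hKcR (by linarith) i
      have core_d : Cstar*Kc^i*(δ * R^i * Real.exp (Kstar - Kstar*(4/3:ℝ)^i))^2
          ≤ 1/6 * (δ * R^(i+1) * Real.exp (Kstar - Kstar*(4/3:ℝ)^(i+1))) := by
        have hexpD : Real.exp (Kstar - Kstar*(4/3:ℝ)^i) ^ 2
            = Real.exp Kstar * Real.exp (-(2/3*Kstar*(4/3:ℝ)^i))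
              * Real.exp (Kstar - Kstar*(4/3:ℝ)^(i+1)) := by
          rw [sq, ← Real.exp_add, ← Real.exp_add, ← Real.exp_add, hpowsucc]
          congr 1; ring
        have heq : Cstar*Kc^i*(δ * R^i * Real.exp (Kstar - Kstar*(4/3:ℝ)^i))^2
            = (Cstar * Real.exp Kstar
                * ((Kc*R)^i * Real.exp (-(2/3*Kstar*(4/3:ℝ)^i))) * δ)
              * (δ * R^i * Real.exp (Kstar - Kstar*(4/3:ℝ)^(i+1))) := by
          rw [mul_pow, mul_pow, hexpD, mul_pow]
          ring
        have hf1 : Cstar * Real.exp Kstar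
            * ((Kc*R)^i * Real.exp (-(2/3*Kstar*(4/3:ℝ)^i))) * δ ≤ 1/6 := by
          have hs1 : Cstar * Real.exp Kstar
              * ((Kc*R)^i * Real.exp (-(2/3*Kstar*(4/3:ℝ)^i))) * δ
              ≤ Cstar * Real.exp Kstar * E2d * δ := by
            apply mul_le_mul_of_nonneg_right _ hδ0
            apply mul_le_mul_of_nonneg_left hkeyD
            positivity
          have hs2 : Cstar * Real.exp Kstar * E2d * δ
              ≤ Cstar*Real.exp Kstar*E2d*εs := by
            apply mul_le_mul_of_nonneg_left hδεs
            positivity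
          exact le_trans hs1 (le_trans hs2 hεsD)
        have hf2nn : (0:ℝ) ≤ δ * R^i * Real.exp (Kstar - Kstar*(4/3:ℝ)^(i+1)) := by
          apply mul_nonneg (mul_nonneg hδ0 hRip) (Real.exp_nonneg _)
        have hf2le : δ * R^i * Real.exp (Kstar - Kstar*(4/3:ℝ)^(i+1))
            ≤ δ * R^(i+1) * Real.exp (Kstar - Kstar*(4/3:ℝ)^(i+1)) := by
          apply mul_le_mul_of_nonneg_right _ (Real.exp_nonneg _)
          apply mul_le_mul_of_nonneg_left (pow_le_pow_right₀ hR1 (Nat.le_succ i)) hδ0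
        calc Cstar*Kc^i*(δ * R^i * Real.exp (Kstar - Kstar*(4/3:ℝ)^i))^2
            = _ := heq
          _ ≤ 1/6 * (δ * R^i * Real.exp (Kstar - Kstar*(4/3:ℝ)^(i+1))) :=
              mul_le_mul_of_nonneg_right hf1 hf2nn
          _ ≤ 1/6 * (δ * R^(i+1) * Real.exp (Kstar - Kstar*(4/3:ℝ)^(i+1))) := by
              linarith
      -- core linear bound (ε1 term in Q)
      have hkeyC : Kc^i * Real.exp (-(1/15*Kstar * (4/3:ℝ)^i)) ≤ E1 := by
        rw [hE1_def]; exact keyE Kc (1/15*Kstar) hKc (by linarith) i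
      have core_c : Cstar*Kc^i*(δ * R^i * Real.exp (7/5*Kstar - 7/5*(Kstar*(4/3:ℝ)^i)))
          ≤ 1/3 * (δ * R^(i+1) * Real.exp (Kstar - Kstar*(4/3:ℝ)^(i+1))) := by
        have hexpC : Real.exp (7/5*Kstar - 7/5*(Kstar*(4/3:ℝ)^i))
            = Real.exp (2/5*Kstar) * Real.exp (-(1/15*Kstar*(4/3:ℝ)^i))
              * Real.exp (Kstar - Kstar*(4/3:ℝ)^(i+1)) := by
          rw [← Real.exp_add, ← Real.exp_add, hpowsucc]
          congr 1; ring
        have heq : Cstar*Kc^i*(δ * R^i * Real.exp (7/5*Kstar - 7/5*(Kstar*(4/3:ℝ)^i)))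
            = (Cstar * Real.exp (2/5*Kstar)
                * (Kc^i * Real.exp (-(1/15*Kstar*(4/3:ℝ)^i))))
              * (δ * R^i * Real.exp (Kstar - Kstar*(4/3:ℝ)^(i+1))) := by
          rw [hexpC]; ring
        have hf1 : Cstar * Real.exp (2/5*Kstar)
            * (Kc^i * Real.exp (-(1/15*Kstar*(4/3:ℝ)^i))) ≤ R/3 := by
          have hs1 : Cstar * Real.exp (2/5*Kstar)
              * (Kc^i * Real.exp (-(1/15*Kstar*(4/3:ℝ)^i)))
              ≤ Cstar * Real.exp (2/5*Kstar) * E1 := by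
            apply mul_le_mul_of_nonneg_left hkeyC
            positivity
          linarith
        have hf2nn : (0:ℝ) ≤ δ * R^i * Real.exp (Kstar - Kstar*(4/3:ℝ)^(i+1)) := by
          apply mul_nonneg (mul_nonneg hδ0 hRip) (Real.exp_nonneg _)
        calc Cstar*Kc^i*(δ * R^i * Real.exp (7/5*Kstar - 7/5*(Kstar*(4/3:ℝ)^i)))
            = _ := heq
          _ ≤ (R/3) * (δ * R^i * Real.exp (Kstar - Kstar*(4/3:ℝ)^(i+1))) :=
              mul_le_mul_of_nonneg_right hf1 hf2nn
          _ = 1/3 * (δ * R^(i+1) * Real.exp (Kstar - Kstar*(4/3:ℝ)^(i+1))) := by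
              rw [pow_succ]; ring
      -- tail bound for P
      have core_b : Cstar*(δ * R^i * Real.exp (7/5*Kstar - 7/5*(Kstar*(4/3:ℝ)^i)))
            *Real.exp (-Kstar*2^i)
          ≤ 1/2 * (δ * R^(i+1) * Real.exp (7/5*Kstar - 7/5*(Kstar*(4/3:ℝ)^(i+1)))) := by
        have hexpB : Real.exp (7/5*Kstar - 7/5*(Kstar*(4/3:ℝ)^i)) * Real.exp (-Kstar*2^i)
            = Real.exp (7/15*(Kstar*(4/3:ℝ)^i) - Kstar*2^i)
              * Real.exp (7/5*Kstar - 7/5*(Kstar*(4/3:ℝ)^(i+1))) := by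
          rw [← Real.exp_add, ← Real.exp_add, hpowsucc]
          congr 1; ring
        have hle1 : Real.exp (7/15*(Kstar*(4/3:ℝ)^i) - Kstar*2^i) ≤ 1 := by
          rw [Real.exp_le_one_iff]
          have hx : Kstar*(4/3:ℝ)^i ≤ Kstar*(2:ℝ)^i :=
            mul_le_mul_of_nonneg_left h2i (le_of_lt hK)
          have hx0 : (0:ℝ) ≤ Kstar*(4/3:ℝ)^i := le_of_lt (mul_pos hK h43p)
          linarith
        have heq : Cstar*(δ * R^i * Real.exp (7/5*Kstar - 7/5*(Kstar*(4/3:ℝ)^i)))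
              *Real.exp (-Kstar*2^i)
            = (Cstar * Real.exp (7/15*(Kstar*(4/3:ℝ)^i) - Kstar*2^i))
              * (δ * R^i * Real.exp (7/5*Kstar - 7/5*(Kstar*(4/3:ℝ)^(i+1)))) := by
          rw [mul_assoc Cstar, mul_assoc (δ * R^i), hexpB]; ring
        have hf1 : Cstar * Real.exp (7/15*(Kstar*(4/3:ℝ)^i) - Kstar*2^i) ≤ R/2 := by
          have := mul_le_mul_of_nonneg_left hle1 (le_of_lt hC0)
          rw [mul_one] at this
          linarith
        have hf2nn : (0:ℝ) ≤ δ * R^i * Real.exp (7/5*Kstar - 7/5*(Kstar*(4/3:ℝ)^(i+1))) := by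
          apply mul_nonneg (mul_nonneg hδ0 hRip) (Real.exp_nonneg _)
        calc Cstar*(δ * R^i * Real.exp (7/5*Kstar - 7/5*(Kstar*(4/3:ℝ)^i)))*Real.exp (-Kstar*2^i)
            = _ := heq
          _ ≤ (R/2) * (δ * R^i * Real.exp (7/5*Kstar - 7/5*(Kstar*(4/3:ℝ)^(i+1)))) :=
              mul_le_mul_of_nonneg_right hf1 hf2nn
          _ = 1/2 * (δ * R^(i+1) * Real.exp (7/5*Kstar - 7/5*(Kstar*(4/3:ℝ)^(i+1)))) := by
              rw [pow_succ]; ring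
      -- tail bound for Q
      have core_e : Cstar*(δ * R^i * Real.exp (Kstar - Kstar*(4/3:ℝ)^i))*Real.exp (-Kstar*2^i)
          ≤ 1/3 * (δ * R^(i+1) * Real.exp (Kstar - Kstar*(4/3:ℝ)^(i+1))) := by
        have hexpE : Real.exp (Kstar - Kstar*(4/3:ℝ)^i) * Real.exp (-Kstar*2^i)
            = Real.exp (1/3*(Kstar*(4/3:ℝ)^i) - Kstar*2^i)
              * Real.exp (Kstar - Kstar*(4/3:ℝ)^(i+1)) := by
          rw [← Real.exp_add, ← Real.exp_add, hpowsucc]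
          congr 1; ring
        have hle1 : Real.exp (1/3*(Kstar*(4/3:ℝ)^i) - Kstar*2^i) ≤ 1 := by
          rw [Real.exp_le_one_iff]
          have hx : Kstar*(4/3:ℝ)^i ≤ Kstar*(2:ℝ)^i :=
            mul_le_mul_of_nonneg_left h2i (le_of_lt hK)
          have hx0 : (0:ℝ) ≤ Kstar*(4/3:ℝ)^i := le_of_lt (mul_pos hK h43p)
          linarith
        have heq : Cstar*(δ * R^i * Real.exp (Kstar - Kstar*(4/3:ℝ)^i))*Real.exp (-Kstar*2^i)
            = (Cstar * Real.exp (1/3*(Kstar*(4/3:ℝ)^i) - Kstar*2^i))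
              * (δ * R^i * Real.exp (Kstar - Kstar*(4/3:ℝ)^(i+1))) := by
          rw [mul_assoc Cstar, mul_assoc (δ * R^i), hexpE]; ring
        have hf1 : Cstar * Real.exp (1/3*(Kstar*(4/3:ℝ)^i) - Kstar*2^i) ≤ R/3 := by
          have := mul_le_mul_of_nonneg_left hle1 (le_of_lt hC0)
          rw [mul_one] at this
          linarith
        have hf2nn : (0:ℝ) ≤ δ * R^i * Real.exp (Kstar - Kstar*(4/3:ℝ)^(i+1)) := by
          apply mul_nonneg (mul_nonneg hδ0 hRip) (Real.exp_nonneg _)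
        calc Cstar*(δ * R^i * Real.exp (Kstar - Kstar*(4/3:ℝ)^i))*Real.exp (-Kstar*2^i)
            = _ := heq
          _ ≤ (R/3) * (δ * R^i * Real.exp (Kstar - Kstar*(4/3:ℝ)^(i+1))) :=
              mul_le_mul_of_nonneg_right hf1 hf2nn
          _ = 1/3 * (δ * R^(i+1) * Real.exp (Kstar - Kstar*(4/3:ℝ)^(i+1))) := by
              rw [pow_succ]; ring
      -- monotone comparisons of the actual terms
      have hCKc : (0:ℝ) ≤ Cstar*Kc^i := mul_nonneg (le_of_lt hC0) hKcip
      have hA : Cstar*Kc^i*(ε1 i + ε0 i)^2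
          ≤ Cstar*Kc^i*(δ * R^i * Real.exp (Kstar - Kstar*(4/3:ℝ)^i))^2 :=
        mul_le_mul_of_nonneg_left hsq hCKc
      have hB : Cstar*Kc^i*ε1 i
          ≤ Cstar*Kc^i*(δ * R^i * Real.exp (7/5*Kstar - 7/5*(Kstar*(4/3:ℝ)^i))) :=
        mul_le_mul_of_nonneg_left hP hCKc
      have hT1 : Cstar*ε1 i*Real.exp (-Kstar*2^i)
          ≤ Cstar*(δ * R^i * Real.exp (7/5*Kstar - 7/5*(Kstar*(4/3:ℝ)^i)))*Real.exp (-Kstar*2^i) := by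
        apply mul_le_mul_of_nonneg_right _ (Real.exp_nonneg _)
        exact mul_le_mul_of_nonneg_left hP (le_of_lt hC0)
      have hTQ : Cstar*ε1 i*Real.exp (-Kstar*2^i) + Cstar*ε0 i*Real.exp (-Kstar*2^i)
          ≤ Cstar*(δ * R^i * Real.exp (Kstar - Kstar*(4/3:ℝ)^i))*Real.exp (-Kstar*2^i) := by
        have h := mul_le_mul_of_nonneg_right
          (mul_le_mul_of_nonneg_left hQ (le_of_lt hC0)) (Real.exp_nonneg (-Kstar*2^i))
        linarith [h]
      constructor
      · -- P at i+1
        linarith [hr1, hA, hT1, core_a, core_b]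
      · -- Q at i+1
        have hsplit : Cstar * Kc ^ i * (ε1 i + (ε1 i + ε0 i) ^ 2)
            = Cstar*Kc^i*ε1 i + Cstar*Kc^i*(ε1 i + ε0 i)^2 := by ring
        rw [hsplit] at hr0
        linarith [hr1, hr0, hA, hB, hTQ, core_c, core_d, core_e]
  intro i hi
  have hQi := (main i hi).2
  have hkF : R^i * Real.exp (-(Kstar * (4/3:ℝ)^i)) ≤ F * Real.exp (-(Kstar * (5/4:ℝ)^i)) := by
    rw [hF_def]; exact keyF R Kstar hR1 hK i
  have hsplitexp : Real.exp (Kstar - Kstar*(4/3:ℝ)^i)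
      = Real.exp Kstar * Real.exp (-(Kstar*(4/3:ℝ)^i)) := by
    rw [← Real.exp_add]; congr 1 <;> ring
  have hstep1 : ε1 i + ε0 i
      ≤ δ * Real.exp Kstar * (R^i * Real.exp (-(Kstar*(4/3:ℝ)^i))) := by
    calc ε1 i + ε0 i ≤ δ * R^i * Real.exp (Kstar - Kstar*(4/3:ℝ)^i) := hQi
      _ = δ * Real.exp Kstar * (R^i * Real.exp (-(Kstar*(4/3:ℝ)^i))) := by
          rw [hsplitexp]; ring
  have hstep2 : δ * Real.exp Kstar * (R^i * Real.exp (-(Kstar*(4/3:ℝ)^i)))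
      ≤ δ * Real.exp Kstar * (F * Real.exp (-(Kstar*(5/4:ℝ)^i))) := by
    apply mul_le_mul_of_nonneg_left hkF
    exact mul_nonneg hδ0 (Real.exp_nonneg _)
  have hstep3 : δ * Real.exp Kstar * (F * Real.exp (-(Kstar*(5/4:ℝ)^i)))
      ≤ Cs * δ * Real.exp (-Kstar*(5/4:ℝ)^i) := by
    have h1 : Real.exp Kstar * F ≤ Cs := by
      rw [hCs_def]; linarith
    have h2 : (0:ℝ) ≤ δ * Real.exp (-Kstar*(5/4:ℝ)^i) :=
      mul_nonneg hδ0 (Real.exp_nonneg _)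
    have heq : δ * Real.exp Kstar * (F * Real.exp (-(Kstar*(5/4:ℝ)^i)))
        = (Real.exp Kstar * F) * (δ * Real.exp (-Kstar*(5/4:ℝ)^i)) := by
      rw [neg_mul]; ring
    rw [heq]
    calc (Real.exp Kstar * F) * (δ * Real.exp (-Kstar*(5/4:ℝ)^i))
        ≤ Cs * (δ * Real.exp (-Kstar*(5/4:ℝ)^i)) :=
          mul_le_mul_of_nonneg_right h1 h2
      _ = Cs * δ * Real.exp (-Kstar*(5/4:ℝ)^i) := by ring
  calc ε1 i + ε0 i ≤ δ * Real.exp Kstar * (R^i * Real.exp (-(Kstar*(4/3:ℝ)^i))) := hstep1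
    _ ≤ δ * Real.exp Kstar * (F * Real.exp (-(Kstar*(5/4:ℝ)^i))) := hstep2
    _ ≤ Cs * δ * Real.exp (-Kstar*(5/4:ℝ)^i) := hstep3
end

section
/- Let E be a real normed vector space, F ⊆ E a closed linear subspace, and X, Y : E → E Fréchet-differentiable maps that both leave F invariant (X(v) ∈ F and Y(v) ∈ F for all v ∈ F). Then the commutator [X, Y] also leaves F invariant: [X, Y](v) ∈ F for all v ∈ F. -/
/-! A derivative carries the tangent cone of a set into the tangent cone of its image. The
tangent cone of a closed subspace at any of its points is the subspace itself, so at `v ∈ F`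
both `DX(v)` and `DY(v)` map `F` into `F`, and hence so does the commutator. -/

open Set Filter Topology
open scoped Pointwise

namespace Submodule

variable {𝕜 E : Type*} [NontriviallyNormedField 𝕜] [NormedAddCommGroup E] [NormedSpace 𝕜 E]
  {F : Submodule 𝕜 E} {x : E}

theorem subset_tangentConeAt (hx : x ∈ F) : (F : Set E) ⊆ tangentConeAt 𝕜 F x := fun _ hy ↦
  mem_tangentConeAt_of_add_smul_mem (l := 𝓝[≠] (0 : 𝕜)) tendsto_id
    (Eventually.of_forall fun c ↦ F.add_mem hx (F.smul_mem c hy))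

theorem tangentConeAt_subset (hF : IsClosed (F : Set E)) (hx : x ∈ F) :
    tangentConeAt 𝕜 F x ⊆ F := by
  have hpre : ((x + ·) ⁻¹' (F : Set E)) = F := by
    ext y
    exact F.add_mem_iff_right hx
  calc tangentConeAt 𝕜 F x
      ⊆ closure ((univ : Set 𝕜) • (univ ∩ (x + ·) ⁻¹' (F : Set E))) := by
        rw [tangentConeAt_eq_biInter_closure]
        exact biInter_subset_of_mem univ_mem
    _ ⊆ F := by
        rw [univ_inter, hpre]
        exact closure_minimal (smul_subset_iff.2 fun c _ y hy ↦ F.smul_mem c hy) hF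

end Submodule

theorem HasFDerivWithinAt.mapsTo_submodule
    {𝕜 E G : Type*} [NontriviallyNormedField 𝕜] [NormedAddCommGroup E] [NormedSpace 𝕜 E]
    [NormedAddCommGroup G] [NormedSpace 𝕜 G] {f : E → G} {f' : E →L[𝕜] G}
    {F : Submodule 𝕜 E} {K : Submodule 𝕜 G} {x : E}
    (hf : HasFDerivWithinAt f f' F x) (hK : IsClosed (K : Set G)) (hfFK : MapsTo f F K)
    (hx : x ∈ F) : MapsTo f' F K :=
  (hf.mapsTo_tangent_cone.mono_left (Submodule.subset_tangentConeAt hx)).mono_right <|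
    (tangentConeAt_mono hfFK.image_subset).trans (Submodule.tangentConeAt_subset hK (hfFK hx))

/-- If two differentiable vector fields `X, Y` leave a closed linear subspace `F`
invariant, so does their commutator `[X, Y](v) = DX(v)[Y(v)] - DY(v)[X(v)]`. -/
theorem commutator_preserves_subspace
    {E : Type*} [NormedAddCommGroup E] [NormedSpace ℝ E]
    (F : Submodule ℝ E) (hF : IsClosed (F : Set E))
    (X Y : E → E) (hX : Differentiable ℝ X) (hY : Differentiable ℝ Y)
    (hXF : ∀ v ∈ F, X v ∈ F) (hYF : ∀ v ∈ F, Y v ∈ F) :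
    ∀ v ∈ F, fderiv ℝ X v (Y v) - fderiv ℝ Y v (X v) ∈ F := by
  intro v hv
  have hDX := (hX v).hasFDerivAt.hasFDerivWithinAt.mapsTo_submodule hF hXF hv
  have hDY := (hY v).hasFDerivAt.hasFDerivWithinAt.mapsTo_submodule hF hYF hv
  exact F.sub_mem (hDX (hYF v hv)) (hDY (hXF v hv))
end

section
/- Let α, β : ℝ → ℝ be twice differentiable functions with α(a) + β(b) > 0 for all a, b ∈ ℝ. Then the function y(t, x) := −log( α(t + x) + β(t − x) ) is a solution of the derivative wave equation with null-condition nonlinearity: y_tt − y_xx = (y_t)² − (y_x)² at every point (t, x) ∈ ℝ². -/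
lemma hd_add (f : ℝ → ℝ) (hf : Differentiable ℝ f) (x t : ℝ) :
    HasDerivAt (fun s => f (s + x)) (deriv f (t + x)) t := by
  have h1 : HasDerivAt (fun s : ℝ => s + x) 1 t := (hasDerivAt_id t).add_const x
  simpa [Function.comp_def] using ((hf (t + x)).hasDerivAt).comp t h1

lemma hd_sub (f : ℝ → ℝ) (hf : Differentiable ℝ f) (x t : ℝ) :
    HasDerivAt (fun s => f (s - x)) (deriv f (t - x)) t := by
  have h1 : HasDerivAt (fun s : ℝ => s - x) 1 t := (hasDerivAt_id t).sub_const x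
  simpa [Function.comp_def] using ((hf (t - x)).hasDerivAt).comp t h1

lemma hd_add' (f : ℝ → ℝ) (hf : Differentiable ℝ f) (t x : ℝ) :
    HasDerivAt (fun s => f (t + s)) (deriv f (t + x)) x := by
  have h1 : HasDerivAt (fun s : ℝ => t + s) 1 x := (hasDerivAt_id x).const_add t
  simpa [Function.comp_def] using ((hf (t + x)).hasDerivAt).comp x h1

lemma hd_sub' (f : ℝ → ℝ) (hf : Differentiable ℝ f) (t x : ℝ) :
    HasDerivAt (fun s => f (t - s)) (-deriv f (t - x)) x := by
  have h1 : HasDerivAt (fun s : ℝ => t - s) (-1) x := (hasDerivAt_id x).const_sub t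
  simpa [Function.comp_def] using ((hf (t - x)).hasDerivAt).comp x h1

/-- Explicit solutions of the null-condition derivative wave equation: if
`α, β : ℝ → ℝ` are twice differentiable with `α(a) + β(b) > 0` for all `a, b`, then
`y(t, x) = -log(α(t + x) + β(t - x))` satisfies `y_tt - y_xx = y_t² - y_x²`
everywhere. -/
theorem null_condition_explicit_solution
    (α β : ℝ → ℝ)
    (hα : Differentiable ℝ α) (hα' : Differentiable ℝ (deriv α))
    (hβ : Differentiable ℝ β) (hβ' : Differentiable ℝ (deriv β))
    (hpos : ∀ a b : ℝ, 0 < α a + β b) :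
    ∀ t x : ℝ,
      ptime2 (fun q : ℝ × ℝ => -Real.log (α (q.1 + q.2) + β (q.1 - q.2))) t x
        - pspace2 (fun q : ℝ × ℝ => -Real.log (α (q.1 + q.2) + β (q.1 - q.2))) t x
      = (ptime (fun q : ℝ × ℝ => -Real.log (α (q.1 + q.2) + β (q.1 - q.2))) t x) ^ 2
        - (pspace (fun q : ℝ × ℝ => -Real.log (α (q.1 + q.2) + β (q.1 - q.2))) t x) ^ 2 := by
  intro t x
  set Y : ℝ × ℝ → ℝ := fun q : ℝ × ℝ => -Real.log (α (q.1 + q.2) + β (q.1 - q.2)) with hY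
  have hne : ∀ a b : ℝ, α a + β b ≠ 0 := fun a b => (hpos a b).ne'
  -- first time derivative formula
  have ht1 : ∀ t x : ℝ, ptime Y t x
      = -((α (t + x) + β (t - x))⁻¹ * (deriv α (t + x) + deriv β (t - x))) := by
    intro t x
    have hg : HasDerivAt (fun s => α (s + x) + β (s - x))
        (deriv α (t + x) + deriv β (t - x)) t := (hd_add α hα x t).add (hd_sub β hβ x t)
    have := ((Real.hasDerivAt_log (hne (t + x) (t - x))).comp t hg).neg
    exact this.deriv
  -- first space derivative formula
  have hx1 : ∀ t x : ℝ, pspace Y t x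
      = -((α (t + x) + β (t - x))⁻¹ * (deriv α (t + x) - deriv β (t - x))) := by
    intro t x
    have hg : HasDerivAt (fun s => α (t + s) + β (t - s))
        (deriv α (t + x) - deriv β (t - x)) x := by
      simpa [sub_eq_add_neg, Pi.add_def] using (hd_add' α hα t x).add (hd_sub' β hβ t x)
    exact (((Real.hasDerivAt_log (hne (t + x) (t - x))).comp x hg).neg).deriv
  -- abbreviations
  set g : ℝ := α (t + x) + β (t - x) with hgdef
  set p : ℝ := deriv α (t + x) with hp
  set q : ℝ := deriv β (t - x) with hq
  set P : ℝ := deriv (deriv α) (t + x) with hP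
  set Q : ℝ := deriv (deriv β) (t - x) with hQ
  have hgne : g ≠ 0 := hne _ _
  -- second time derivative
  have ht2 : ptime2 Y t x = -((-(p + q) / g ^ 2) * (p + q) + g⁻¹ * (P + Q)) := by
    have hfun : (fun s => ptime Y s x)
        = fun s => -((α (s + x) + β (s - x))⁻¹ * (deriv α (s + x) + deriv β (s - x))) := by
      funext s; exact ht1 s x
    have hg : HasDerivAt (fun s => α (s + x) + β (s - x)) (p + q) t :=
      (hd_add α hα x t).add (hd_sub β hβ x t)
    have hinv : HasDerivAt (fun s => (α (s + x) + β (s - x))⁻¹) (-(p + q) / g ^ 2) t :=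
      hg.inv hgne
    have hd' : HasDerivAt (fun s => deriv α (s + x) + deriv β (s - x)) (P + Q) t :=
      (hd_add (deriv α) hα' x t).add (hd_sub (deriv β) hβ' x t)
    have := (hinv.mul hd').neg
    rw [ptime2, hfun]
    exact this.deriv
  -- second space derivative
  have hx2 : pspace2 Y t x = -((-(p - q) / g ^ 2) * (p - q) + g⁻¹ * (P + Q)) := by
    have hfun : (fun s => pspace Y t s)
        = fun s => -((α (t + s) + β (t - s))⁻¹ * (deriv α (t + s) - deriv β (t - s))) := by
      funext s; exact hx1 t s
    have hg : HasDerivAt (fun s => α (t + s) + β (t - s)) (p - q) x := by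
      have := (hd_add' α hα t x).add (hd_sub' β hβ t x)
      simpa [sub_eq_add_neg, Pi.add_def, hp, hq] using this
    have hinv : HasDerivAt (fun s => (α (t + s) + β (t - s))⁻¹) (-(p - q) / g ^ 2) x :=
      hg.inv hgne
    have hd' : HasDerivAt (fun s => deriv α (t + s) - deriv β (t - s)) (P + Q) x := by
      have := (hd_add' (deriv α) hα' t x).sub (hd_sub' (deriv β) hβ' t x)
      simpa [sub_neg_eq_add, Pi.sub_def] using this
    have := (hinv.mul hd').neg
    rw [pspace2, hfun]
    exact this.deriv
  rw [ht2, hx2, ht1 t x, hx1 t x, ← hgdef, ← hp, ← hq]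
  field_simp
  ring
end
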